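/- arXiv:2105.05374 — 12 statements merged into one kernel-verified Lean document; each statement's English description precedes it below -/
import Mathlib

section
/- Every subset of Cantor space 2^ℕ with the Baire property that is independent with respect to the digraph 𝔾₀ is meager. Here 𝔾₀ is defined from a fixed sequence of finite binary strings (sₙ)ₙ with sₙ of length n such that every finite binary string has some sₙ extending it, by 𝔾₀ = {(sₙ⌢0⌢c, sₙ⌢1⌢c) : c ∈ 2^ℕ, n ∈ ℕ}. A set B is 𝔾₀-independent if no pair in 𝔾₀ has both coordinates in B. -/
/-- Concatenation of the first `n` bits of `u` with `c`. -/
def cat (n : ℕ) (u c : ℕ → Bool) : ℕ → Bool :=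
  fun m => if m < n then u m else c (m - n)

/-- Prepending a single bit. -/
def cons (i : Bool) (c : ℕ → Bool) : ℕ → Bool :=
  fun m => if m = 0 then i else c (m - 1)

/-- `s` codes a sequence of binary strings, `s n` of length `n` (only the first
`n` bits matter), such that every finite binary string is extended by some `s n`. -/
def DenseStrings (s : ℕ → ℕ → Bool) : Prop :=
  ∀ t : ℕ → Bool, ∀ k : ℕ, ∃ n : ℕ, k ≤ n ∧ ∀ i < k, s n i = t i

/-- The digraph `𝔾₀` on Cantor space determined by `s`. -/
def G0 (s : ℕ → ℕ → Bool) : Set ((ℕ → Bool) × (ℕ → Bool)) :=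
  {p | ∃ n c, p = (cat n (s n) (cons false c), cat n (s n) (cons true c))}

/-- Basic cylinder sets in Cantor space. -/
def Cyl (t : ℕ → Bool) (k : ℕ) : Set (ℕ → Bool) := {x | ∀ m < k, x m = t m}

lemma isOpen_Cyl (t : ℕ → Bool) (k : ℕ) : IsOpen (Cyl t k) := by
  have h : Cyl t k = (Set.Iio k).pi (fun m => {t m}) := by
    ext x; simp [Cyl, Set.mem_pi]
  rw [h]
  exact isOpen_set_pi (Set.finite_Iio k) (fun i _ => isOpen_discrete _)

lemma continuous_phi (n : ℕ) (u : ℕ → Bool) (i : Bool) :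
    Continuous (fun c => cat n u (cons i c)) := by
  apply continuous_pi
  intro m
  simp only [cat, cons]
  by_cases h1 : m < n
  · simp only [h1, if_true]; exact continuous_const
  · by_cases h2 : m - n = 0
    · simp only [h1, h2, if_false, if_true]; exact continuous_const
    · simp only [h1, h2, if_false]; exact continuous_apply _

lemma psi_phi (n : ℕ) (u : ℕ → Bool) (i : Bool) (c : ℕ → Bool) :
    (fun m => cat n u (cons i c) (m + n + 1)) = c := by
  funext m
  have h1 : ¬ (m + n + 1 < n) := by omega
  have h2 : m + n + 1 - n = m + 1 := by omega
  simp [cat, cons, h1, h2]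

lemma phi_mem_C (n : ℕ) (u : ℕ → Bool) (i : Bool) (c : ℕ → Bool) :
    cat n u (cons i c) ∈ Cyl (cat n u (cons i (fun _ => false))) (n + 1) := by
  intro m hm
  by_cases h : m < n
  · simp [cat, h]
  · have hm' : m = n := by omega
    subst hm'
    simp [cat, cons]

lemma phi_psi (n : ℕ) (u : ℕ → Bool) (i : Bool) (x : ℕ → Bool)
    (hx : x ∈ Cyl (cat n u (cons i (fun _ => false))) (n + 1)) :
    cat n u (cons i (fun m => x (m + n + 1))) = x := by
  funext m
  by_cases h1 : m < n
  · have := hx m (by omega)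
    simp only [cat, cons, h1, if_true] at this ⊢
    exact this.symm
  · by_cases h2 : m = n
    · have := hx m (by omega)
      have hmn : m - n = 0 := by omega
      simp only [cat, cons, h1, if_false, hmn, if_true] at this ⊢
      exact this.symm
    · have h3 : ¬ (m - n = 0) := by omega
      have h4 : m - n - 1 + n + 1 = m := by omega
      simp [cat, cons, h1, h3, h4]

lemma isOpenMap_phi (n : ℕ) (u : ℕ → Bool) (i : Bool) :
    IsOpenMap (fun c => cat n u (cons i c)) := by
  intro V hV
  have himg : (fun c => cat n u (cons i c)) '' V
      = Cyl (cat n u (cons i (fun _ => false))) (n + 1) ∩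
        (fun x => (fun m => x (m + n + 1))) ⁻¹' V := by
    ext x
    constructor
    · rintro ⟨c, hc, rfl⟩
      refine ⟨phi_mem_C n u i c, ?_⟩
      simpa [psi_phi n u i c] using hc
    · rintro ⟨hx, hx2⟩
      exact ⟨fun m => x (m + n + 1), hx2, phi_psi n u i x hx⟩
  rw [himg]
  exact (isOpen_Cyl _ _).inter (hV.preimage (continuous_pi fun m => continuous_apply _))

theorem g0_independent_baire_measurable_set_is_meager
    (s : ℕ → ℕ → Bool) (hs : DenseStrings s) (B : Set (ℕ → Bool))
    (hB : BaireMeasurableSet B)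
    (hind : ∀ p ∈ G0 s, ¬(p.1 ∈ B ∧ p.2 ∈ B)) :
    IsMeagre B := by
  by_contra hmeager
  obtain ⟨U, hU, hBU⟩ := hB.residualEq_isOpen
  have hres : {x | x ∈ B ↔ x ∈ U} ∈ residual (ℕ → Bool) :=
    Filter.eventuallyEq_set.mp hBU
  -- the symmetric difference is meager
  have hMB : IsMeagre (B \ U ∪ U \ B) := by
    rw [IsMeagre]
    refine Filter.mem_of_superset hres ?_
    intro x hx
    simp only [Set.mem_setOf_eq] at hx
    simp only [Set.mem_compl_iff, Set.mem_union, Set.mem_diff]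
    tauto
  -- U is nonempty
  have hUne : U.Nonempty := by
    rcases Set.eq_empty_or_nonempty U with h | h
    · exfalso
      apply hmeager
      refine hMB.mono ?_
      intro x hx
      subst h
      simp [hx]
    · exact h
  obtain ⟨x, hx⟩ := hUne
  -- find a basic cylinder inside U
  obtain ⟨I, u, hu, hsub⟩ := isOpen_pi_iff.mp hU x hx
  set k : ℕ := I.sup id + 1 with hk
  have hcyl : Cyl x k ⊆ U := by
    intro y hy
    apply hsub
    intro m hm
    have hmk : m < k := by
      have : m ≤ I.sup id := Finset.le_sup (f := id) hm
      omega
    rw [hy m hmk]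
    exact (hu m hm).2
  -- find n extending x↾k
  obtain ⟨n, hkn, hext⟩ := hs x k
  -- both branches land in U
  have hphiU : ∀ (i : Bool) (c : ℕ → Bool), cat n (s n) (cons i c) ∈ U := by
    intro i c
    apply hcyl
    intro m hm
    have hmn : m < n := lt_of_lt_of_le hm hkn
    have : cat n (s n) (cons i c) m = s n m := by simp [cat, hmn]
    rw [this]
    exact hext m hm
  -- preimages of the symmetric difference are meager
  have hD : ∀ i : Bool, IsMeagre ((fun c => cat n (s n) (cons i c)) ⁻¹' (B \ U ∪ U \ B)) := by
    intro i
    exact hMB.preimage_of_isOpenMap (continuous_phi n (s n) i) (isOpenMap_phi n (s n) i)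
  -- a comeager set of good points
  have hmem : (((fun c => cat n (s n) (cons false c)) ⁻¹' (B \ U ∪ U \ B))ᶜ ∩
      ((fun c => cat n (s n) (cons true c)) ⁻¹' (B \ U ∪ U \ B))ᶜ) ∈
        residual (ℕ → Bool) :=
    Filter.inter_mem (hD false) (hD true)
  obtain ⟨c, hc0, hc1⟩ := (dense_of_mem_residual hmem).nonempty
  have hBmem : ∀ i : Bool, cat n (s n) (cons i c) ∈ B := by
    intro i
    have hU' := hphiU i c
    have hnot : cat n (s n) (cons i c) ∉ B \ U ∪ U \ B := by
      cases i
      · exact hc0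
      · exact hc1
    by_contra hnB
    exact hnot (Or.inr ⟨hU', hnB⟩)
  exact hind (cat n (s n) (cons false c), cat n (s n) (cons true c)) ⟨n, c, rfl⟩
    ⟨hBmem false, hBmem true⟩
end

section
/- The smallest equivalence relation on Cantor space 2^ℕ containing the digraph 𝔾₀ is the eventual-equality relation E₀, where c E₀ d iff there exists n ∈ ℕ such that c(m) = d(m) for all m ≥ n. -/
/-- Eventual equality on Cantor space. -/
def E0 (c d : ℕ → Bool) : Prop := ∃ n : ℕ, ∀ m ≥ n, c m = d m

lemma key_lemma (s : ℕ → ℕ → Bool) : ∀ k : ℕ, ∀ c d : ℕ → Bool,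
    (∀ m ≥ k, c m = d m) → Relation.EqvGen (fun a b => (a, b) ∈ G0 s) c d := by
  intro k
  induction k with
  | zero =>
    intro c d h
    have : c = d := funext fun m => h m (Nat.zero_le m)
    exact this ▸ Relation.EqvGen.refl c
  | succ k ih =>
    intro c d h
    by_cases hk : c k = d k
    · apply ih
      intro m hm
      rcases eq_or_lt_of_le hm with rfl | hlt
      · exact hk
      · exact h m hlt
    · set e : ℕ → Bool := fun m => c (k + 1 + m) with he
      set x := cat k (s k) (cons (c k) e) with hx
      set y := cat k (s k) (cons (d k) e) with hy
      have hxm : ∀ m ≥ k, x m = c m := by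
        intro m hm
        simp only [hx, cat, cons, he]
        rcases eq_or_lt_of_le hm with rfl | hlt
        · simp
        · have h1 : ¬ m < k := by omega
          have h2 : ¬ m - k = 0 := by omega
          simp only [if_neg h1, if_neg h2]
          congr 1
          omega
      have hym : ∀ m ≥ k, y m = d m := by
        intro m hm
        simp only [hy, cat, cons, he]
        rcases eq_or_lt_of_le hm with rfl | hlt
        · simp
        · have h1 : ¬ m < k := by omega
          have h2 : ¬ m - k = 0 := by omega
          simp only [if_neg h1, if_neg h2]
          have : k + 1 + (m - k - 1) = m := by omega
          rw [this]
          exact h m hlt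
      have hcx : Relation.EqvGen (fun a b => (a, b) ∈ G0 s) c x :=
        ih c x (fun m hm => (hxm m hm).symm)
      have hyd : Relation.EqvGen (fun a b => (a, b) ∈ G0 s) y d :=
        ih y d hym
      have hxy : Relation.EqvGen (fun a b => (a, b) ∈ G0 s) x y := by
        rcases Bool.eq_false_or_eq_true (c k) with hc | hc
        · have hd : d k = false := by
            cases hdk : d k
            · rfl
            · rw [hc, hdk] at hk; exact absurd rfl hk
          apply Relation.EqvGen.symm
          apply Relation.EqvGen.rel
          exact ⟨k, e, by rw [hx, hy, hc, hd]⟩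
        · have hd : d k = true := by
            cases hdk : d k
            · rw [hc, hdk] at hk; exact absurd rfl hk
            · rfl
          apply Relation.EqvGen.rel
          exact ⟨k, e, by rw [hx, hy, hc, hd]⟩
      exact (hcx.trans _ _ _ hxy).trans _ _ _ hyd

/-- The smallest equivalence relation containing `𝔾₀` is `E₀`. -/
theorem eqvGen_g0_eq_e0 (s : ℕ → ℕ → Bool) (hs : DenseStrings s) :
    ∀ c d : ℕ → Bool, Relation.EqvGen (fun a b => (a, b) ∈ G0 s) c d ↔ E0 c d := by
  intro c d
  constructor
  · intro h
    induction h with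
    | rel a b hab =>
      obtain ⟨n, e, hp⟩ := hab
      have ha : a = cat n (s n) (cons false e) := congrArg Prod.fst hp
      have hb : b = cat n (s n) (cons true e) := congrArg Prod.snd hp
      refine ⟨n + 1, fun m hm => ?_⟩
      subst ha hb
      simp only [cat, cons]
      have h1 : ¬ m < n := by omega
      have h2 : ¬ m - n = 0 := by omega
      simp [h1, h2]
    | refl a => exact ⟨0, fun m _ => rfl⟩
    | symm a b _ ih =>
      obtain ⟨n, hn⟩ := ih
      exact ⟨n, fun m hm => (hn m hm).symm⟩
    | trans a b c _ _ ih1 ih2 =>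
      obtain ⟨n1, h1⟩ := ih1
      obtain ⟨n2, h2⟩ := ih2
      exact ⟨max n1 n2, fun m hm =>
        (h1 m (le_trans (le_max_left _ _) hm)).trans (h2 m (le_trans (le_max_right _ _) hm))⟩
  · rintro ⟨n, hn⟩
    exact key_lemma s n c d hn
end

section
/- Suppose n ≥ 2, (Xᵢ)_{i<n} are Hausdorff spaces, Aᵢ ⊆ Xᵢ is analytic for each i < n, R ⊆ ∏ᵢ Xᵢ is analytic, and the product ∏ᵢ Aᵢ is disjoint from R. Then there exist Borel sets Bᵢ ⊆ Xᵢ with Aᵢ ⊆ Bᵢ for all i < n and ∏ᵢ Bᵢ disjoint from R. -/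
open MeasureTheory Set

lemma analyticSet_preimage_of_polish {β X : Type*} [TopologicalSpace β] [PolishSpace β]
    [TopologicalSpace X] [T2Space X] {g : β → X} (hg : Continuous g)
    {A : Set X} (hA : AnalyticSet A) : AnalyticSet (g ⁻¹' A) := by
  obtain ⟨γ, γt, γp, f, hf, hfr⟩ := analyticSet_iff_exists_polishSpace_range.1 hA
  letI := γt; haveI := γp
  have hcl : IsClosed {p : β × γ | g p.1 = f p.2} :=
    isClosed_eq (hg.comp continuous_fst) (hf.comp continuous_snd)
  haveI := hcl.polishSpace
  have hr : range (fun p : {p : β × γ | g p.1 = f p.2} => (p.1 : β × γ).1) = g ⁻¹' A := by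
    ext b
    simp only [mem_range, mem_preimage, ← hfr]
    constructor
    · rintro ⟨⟨⟨b', c⟩, hp⟩, rfl⟩; exact ⟨c, hp.symm⟩
    · rintro ⟨c, hc⟩; exact ⟨⟨⟨b, c⟩, hc.symm⟩, rfl⟩
  rw [← hr]
  exact analyticSet_range_of_polishSpace (continuous_fst.comp continuous_subtype_val)

theorem analytic_separation_relation
    (n : ℕ) (hn : 2 ≤ n) (X : Fin n → Type) [∀ i, TopologicalSpace (X i)]
    [∀ i, T2Space (X i)]
    (A : ∀ i, Set (X i)) (hA : ∀ i, AnalyticSet (A i))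
    (R : Set (∀ i, X i)) (hR : AnalyticSet R)
    (hindep : R ∩ {x | ∀ i, x i ∈ A i} = ∅) :
    ∃ B : ∀ i, Set (X i),
      (∀ i, MeasurableSet[borel (X i)] (B i)) ∧ (∀ i, A i ⊆ B i) ∧
      R ∩ {x | ∀ i, x i ∈ B i} = ∅ := by
  obtain ⟨β, βt, βp, g, hg, hgr⟩ := analyticSet_iff_exists_polishSpace_range.1 hR
  letI := βt; haveI := βp
  letI : MeasurableSpace β := borel β
  haveI : BorelSpace β := ⟨rfl⟩
  have key : ∀ k : ℕ, k ≤ n → ∃ B : ∀ i, Set (X i),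
      (∀ i : Fin n, (i : ℕ) < k → MeasurableSet[borel (X i)] (B i)) ∧
      (∀ i, A i ⊆ B i) ∧ (∀ i, AnalyticSet {b : β | g b i ∈ B i}) ∧
      R ∩ {x | ∀ i, x i ∈ B i} = ∅ := by
    intro k
    induction k with
    | zero =>
      intro _
      exact ⟨A, fun i h => absurd h (Nat.not_lt_zero _), fun i => subset_rfl,
        fun i => analyticSet_preimage_of_polish ((continuous_apply i).comp hg) (hA i), hindep⟩
    | succ k ih =>
      intro hk
      obtain ⟨B, hB1, hB2, hB3, hB4⟩ := ih (Nat.le_of_succ_le hk)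
      have hkn : k < n := hk
      set K : Fin n := ⟨k, hkn⟩ with hK
      haveI : Nonempty {i : Fin n // i ≠ K} := by
        rcases eq_or_ne K ⟨0, by omega⟩ with h | h
        · exact ⟨⟨⟨1, by omega⟩, by rw [h]; intro he; exact absurd (Fin.mk.injEq .. ▸ he) one_ne_zero⟩⟩
        · exact ⟨⟨⟨0, by omega⟩, fun he => h he.symm⟩⟩
      set S : Set β := ⋂ i : {i : Fin n // i ≠ K}, {b : β | g b i.1 ∈ B i.1} with hSdef
      have hS : AnalyticSet S := AnalyticSet.iInter fun i => hB3 i.1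
      set T : Set (X K) := (fun b => g b K) '' S with hTdef
      have hT : AnalyticSet T := hS.image_of_continuous ((continuous_apply K).comp hg)
      have hdis : Disjoint (A K) T := by
        rw [Set.disjoint_left]
        rintro a haA ⟨b, hbS, rfl⟩
        have hxR : g b ∈ R := hgr ▸ mem_range_self b
        have hxB : ∀ i, g b i ∈ B i := by
          intro i
          rcases eq_or_ne i K with rfl | hi
          · exact hB2 _ haA
          · exact mem_iInter.1 hbS ⟨i, hi⟩
        have : g b ∈ R ∩ {x | ∀ i, x i ∈ B i} := ⟨hxR, hxB⟩
        rw [hB4] at this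
        exact this
      letI : MeasurableSpace (X K) := borel (X K)
      haveI : BorelSpace (X K) := ⟨rfl⟩
      obtain ⟨u, hAu, hTu, humeas⟩ := (hA K).measurablySeparable hT hdis
      refine ⟨Function.update B K u, ?_, ?_, ?_, ?_⟩
      · intro i hi
        rcases eq_or_ne i K with rfl | h
        · rwa [Function.update_self]
        · rw [Function.update_of_ne h]
          apply hB1
          have : (i : ℕ) ≠ k := fun he => h (Fin.ext he)
          omega
      · intro i
        rcases eq_or_ne i K with rfl | h
        · rw [Function.update_self]; exact hAu
        · rw [Function.update_of_ne h]; exact hB2 i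
      · intro i
        rcases eq_or_ne i K with rfl | h
        · have : {b : β | g b K ∈ Function.update B K u K} = (fun b => g b K) ⁻¹' u := by
            ext b; rw [Function.update_self]; rfl
          rw [this]
          exact (((continuous_apply K).comp hg).measurable humeas).analyticSet
        · have : {b : β | g b i ∈ Function.update B K u i} = {b : β | g b i ∈ B i} := by
            ext b; rw [Function.update_of_ne h]
          rw [this]
          exact hB3 i
      · ext x
        simp only [mem_inter_iff, mem_setOf_eq, mem_empty_iff_false, iff_false, not_and]
        intro hxR hxB
        obtain ⟨b, rfl⟩ : x ∈ range g := hgr ▸ hxR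
        have hbS : b ∈ S := by
          refine mem_iInter.2 fun i => ?_
          have := hxB i.1
          rwa [Function.update_of_ne i.2] at this
        have hTk : g b K ∈ T := ⟨b, hbS, rfl⟩
        have huk : g b K ∈ u := by have := hxB K; rwa [Function.update_self] at this
        exact Set.disjoint_left.1 hTu hTk huk
  obtain ⟨B, hB1, hB2, _, hB4⟩ := key n le_rfl
  exact ⟨B, fun i => hB1 i i.isLt, hB2, hB4⟩
end

section
/- Suppose n ≥ 2, X is a Hausdorff space, G is an analytic n-dimensional dihypergraph on X (an n-ary relation consisting of non-constant sequences), and A ⊆ X is an analytic G-independent set. Then there is a Borel G-independent set B ⊆ X with A ⊆ B. -/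
/-!
Induct on the number `k` of coordinates allowed to lie outside `A`: keep a Borel set `V ⊇ A` such
that no tuple of `G` with all coordinates in `V` has all but at most `k` of them in `A`. For the
step, the points `g i` with `g ∈ G` in `V`-coordinates, all but at most `k + 1` coordinates in `A`,
and `i` among the exceptional ones, form an analytic set disjoint from `A` (if `g i ∈ A`, the index
`i` was not needed as an exception). Lusin separation gives a Borel `U ⊇ A` avoiding it, and `V ∩ U`
works for `k + 1`. For `k` the number of coordinates, `V` is `G`-independent.
-/

open MeasureTheory Set

namespace MeasureTheory

variable {α β : Type*} [TopologicalSpace α]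

theorem AnalyticSet.inter_measurableSet [MeasurableSpace α] [BorelSpace α] {s u : Set α}
    (hs : AnalyticSet s) (hu : MeasurableSet u) : AnalyticSet (s ∩ u) := by
  rcases analyticSet_iff_exists_polishSpace_range.1 hs with ⟨Z, _, _, f, hf, rfl⟩
  borelize Z
  rw [← image_preimage_eq_range_inter]
  exact (hf.measurable hu).analyticSet.image_of_continuous hf

theorem AnalyticSet.inter_preimage [TopologicalSpace β] [T2Space β] {s : Set α} {t : Set β}
    (hs : AnalyticSet s) (ht : AnalyticSet t) {f : α → β} (hf : Continuous f) :
    AnalyticSet (s ∩ f ⁻¹' t) := by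
  rcases analyticSet_iff_exists_polishSpace_range.1 hs with ⟨Z, _, _, g, hg, rfl⟩
  rw [← image_preimage_eq_range_inter, ← preimage_comp]
  exact (ht.preimage (hf.comp hg)).image_of_continuous hg

theorem AnalyticSet.inter_iInter_preimage {ι : Type*} [Countable ι] [T2Space α]
    [TopologicalSpace β] [T2Space β] {s : Set α} {t : Set β} (hs : AnalyticSet s)
    (ht : AnalyticSet t) {f : ι → α → β} (hf : ∀ i, Continuous (f i)) :
    AnalyticSet (s ∩ ⋂ i, f i ⁻¹' t) := by
  cases isEmpty_or_nonempty ι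
  · simpa using hs
  · rw [inter_iInter]
    exact AnalyticSet.iInter fun i => hs.inter_preimage ht (hf i)

end MeasureTheory

variable {ι X : Type*}

def almostPi (A : Set X) (k : ℕ) : Set (ι → X) :=
  {g | ∃ S : Finset ι, S.card ≤ k ∧ ∀ j ∉ S, g j ∈ A}

theorem almostPi_zero (A : Set X) : (almostPi A 0 : Set (ι → X)) = univ.pi fun _ => A := by
  ext g
  simp [almostPi]

theorem almostPi_card [Fintype ι] (A : Set X) :
    (almostPi A (Fintype.card ι) : Set (ι → X)) = univ :=
  eq_univ_of_forall fun _ => ⟨Finset.univ, le_rfl, fun j hj => absurd (Finset.mem_univ j) hj⟩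

variable [Fintype ι] [TopologicalSpace X] [T2Space X] [MeasurableSpace X] [BorelSpace X]

theorem exists_measurableSet_disjoint_almostPi_succ {H : Set (ι → X)} (hH : AnalyticSet H)
    {A : Set X} (hA : AnalyticSet A) {k : ℕ} (hk : Disjoint H (almostPi A k)) :
    ∃ U, MeasurableSet U ∧ A ⊆ U ∧ Disjoint (H ∩ univ.pi fun _ => U) (almostPi A (k + 1)) := by
  set D : Set X := ⋃ (S : {S : Finset ι // S.card ≤ k + 1}) (i : S.1),
    (· i) '' (H ∩ ⋂ j : {j // j ∉ S.1}, (· j) ⁻¹' A)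
  have hD : AnalyticSet D := .iUnion fun S => .iUnion fun i =>
    (hH.inter_iInter_preimage hA fun j => continuous_apply _).image_of_continuous
      (continuous_apply _)
  have hAD : Disjoint A D := by
    classical
    refine disjoint_left.2 fun x hxA hxD => ?_
    obtain ⟨⟨S, hS⟩, ⟨i, hi⟩, g, ⟨hgH, hgA⟩, rfl⟩ := mem_iUnion₂.1 hxD
    refine disjoint_left.1 hk hgH ⟨S.erase i, by grind [Finset.card_erase_of_mem], fun j hj => ?_⟩
    by_cases hji : j = i
    · exact hji ▸ hxA
    · exact mem_iInter.1 hgA ⟨j, fun hjS => hj (Finset.mem_erase.2 ⟨hji, hjS⟩)⟩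
  obtain ⟨U, hAU, hDU, hU⟩ := hA.measurablySeparable hD hAD
  refine ⟨U, hU, hAU, disjoint_left.2 ?_⟩
  rintro g ⟨hgH, hgU⟩ ⟨S, hS, hSA⟩
  obtain rfl | ⟨i, hi⟩ := S.eq_empty_or_nonempty
  · exact disjoint_left.1 hk hgH ⟨∅, by simp, hSA⟩
  · refine disjoint_left.1 hDU ?_ (hgU i (mem_univ i))
    exact mem_iUnion₂.2 ⟨⟨S, hS⟩, ⟨i, hi⟩,
      mem_image_of_mem _ ⟨hgH, mem_iInter.2 fun j => hSA j j.2⟩⟩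

theorem exists_measurableSet_disjoint_almostPi {G : Set (ι → X)} (hG : AnalyticSet G)
    {A : Set X} (hA : AnalyticSet A) (hAG : Disjoint G (univ.pi fun _ => A)) (k : ℕ) :
    ∃ V, MeasurableSet V ∧ A ⊆ V ∧ Disjoint (G ∩ univ.pi fun _ => V) (almostPi A k) := by
  induction k with
  | zero => exact ⟨univ, .univ, subset_univ A, by simpa [almostPi_zero] using hAG⟩
  | succ k ih =>
    obtain ⟨V, hV, hAV, hVk⟩ := ih
    borelize (ι → X)
    have hGV : AnalyticSet (G ∩ univ.pi fun _ => V) :=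
      hG.inter_measurableSet (pi_le_borel_pi _ (.univ_pi fun _ => hV))
    obtain ⟨U, hU, hAU, hUk⟩ := exists_measurableSet_disjoint_almostPi_succ hGV hA hVk
    refine ⟨V ∩ U, hV.inter hU, subset_inter hAV hAU, ?_⟩
    rwa [pi_inter_distrib, ← inter_assoc]

theorem MeasureTheory.AnalyticSet.exists_measurableSet_superset_disjoint_pi {G : Set (ι → X)}
    (hG : AnalyticSet G) {A : Set X} (hA : AnalyticSet A) (hAG : Disjoint G (univ.pi fun _ => A)) :
    ∃ B, MeasurableSet B ∧ A ⊆ B ∧ Disjoint G (univ.pi fun _ => B) := by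
  obtain ⟨B, hB, hAB, hGB⟩ := exists_measurableSet_disjoint_almostPi hG hA hAG (Fintype.card ι)
  refine ⟨B, hB, hAB, ?_⟩
  simpa [almostPi_card, disjoint_iff_inter_eq_empty] using hGB

theorem analytic_separation_dihypergraph_general
    (n : ℕ) (X : Type) [TopologicalSpace X] [T2Space X]
    (G : Set (Fin n → X)) (hG : AnalyticSet G)
    (A : Set X) (hA : AnalyticSet A)
    (hAind : ∀ x ∈ G, ¬ ∀ i, x i ∈ A) :
    ∃ B : Set X, MeasurableSet[borel X] B ∧ A ⊆ B ∧
      ∀ x ∈ G, ¬ ∀ i, x i ∈ B := by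
  borelize X
  obtain ⟨B, hB, hAB, hGB⟩ := hG.exists_measurableSet_superset_disjoint_pi hA
    (disjoint_left.2 fun x hx hxA => hAind x hx fun i => hxA i (mem_univ i))
  exact ⟨B, hB, hAB, fun x hx hxB => disjoint_left.1 hGB hx fun i _ => hxB i⟩

theorem analytic_separation_dihypergraph
    (n : ℕ) (hn : 2 ≤ n) (X : Type) [TopologicalSpace X] [T2Space X]
    (G : Set (Fin n → X)) (hG : AnalyticSet G)
    (hGnc : ∀ x ∈ G, ¬ ∀ i j : Fin n, x i = x j)
    (A : Set X) (hA : AnalyticSet A)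
    (hAind : ∀ x ∈ G, ¬ ∀ i, x i ∈ A) :
    ∃ B : Set X, MeasurableSet[borel X] B ∧ A ⊆ B ∧
      ∀ x ∈ G, ¬ ∀ i, x i ∈ B :=
  analytic_separation_dihypergraph_general n X G hG A hA hAind
end

section
/- Suppose E and F are equivalence relations on Cantor space 2^ℕ with the Baire property, every E-class is a countable union of (E ∩ F)-classes, and F is disjoint from the digraph 𝔾₀. Then both E and F are meager (as subsets of 2^ℕ × 2^ℕ). -/
/-!
By the Kuratowski–Ulam theorem it suffices to show that the classes of `E` and `F` are meagre.
An `F`-class is `𝔾₀`-independent, and a Baire measurable `𝔾₀`-independent set `A` is meagre: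
otherwise `A` is comeagre in some cylinder, hence in a cylinder `N_{s n}`, and then for
comeagrely many `c` both `s n ⌢ 0 ⌢ c` and `s n ⌢ 1 ⌢ c` lie in `A`, which is a `𝔾₀`-edge.
Kuratowski–Ulam makes comeagrely many `F`-sections Baire measurable, so `F` is meagre; then
`[x]_F × [x]_F ⊆ F` forces every `F`-class to be meagre, and each `E`-class is a countable
union of `F`-classes.
-/

open Set Filter Topology PiNat

theorem IsMeagre.congr {X : Type*} [TopologicalSpace X] {s t : Set X} (hs : IsMeagre s)
    (hst : s =ᵇ t) : IsMeagre t :=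
  (congr_sets hst.compl.mem_iff).1 hs

section KuratowskiUlam

variable {X Y : Type*} [TopologicalSpace X] [TopologicalSpace Y] [SecondCountableTopology Y]

theorem eventually_dense_preimage_prodMk {t : Set (X × Y)} (ht : IsOpen t) (hd : Dense t) :
    ∀ᶠ x in residual X, Dense (Prod.mk x ⁻¹' t) := by
  obtain ⟨B, hBc, hB₀, hB⟩ := TopologicalSpace.exists_countable_basis Y
  have hmeets : ∀ V ∈ B, {x | (V ∩ Prod.mk x ⁻¹' t).Nonempty} ∈ residual X := by
    intro V hVB
    have hVo : IsOpen V := hB.isOpen hVB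
    have hVne : V.Nonempty := nonempty_iff_ne_empty.2 (ne_of_mem_of_not_mem hVB hB₀)
    have himage : {x | (V ∩ Prod.mk x ⁻¹' t).Nonempty} = Prod.fst '' (t ∩ univ ×ˢ V) := by
      ext x
      simp [Set.Nonempty, and_comm]
    refine residual_of_dense_open ?_ (dense_iff_inter_open.2 fun O hO hOne => ?_)
    · rw [himage]
      exact isOpenMap_fst _ (ht.inter (isOpen_univ.prod hVo))
    · obtain ⟨⟨a, b⟩, ⟨ha, hb⟩, hab⟩ := hd.inter_open_nonempty _ (hO.prod hVo) (hOne.prod hVne)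
      exact ⟨a, ha, b, hb, hab⟩
  filter_upwards [(countable_bInter_mem hBc).2 hmeets] with x hx
  exact hB.dense_iff.2 fun V hVB _ => mem_iInter₂.1 hx V hVB

theorem IsMeagre.eventually_isMeagre_preimage_prodMk {W : Set (X × Y)} (hW : IsMeagre W) :
    ∀ᶠ x in residual X, IsMeagre (Prod.mk x ⁻¹' W) := by
  obtain ⟨S, hSo, hSd, hSc, hSW⟩ := mem_residual_iff.1 hW
  filter_upwards [(countable_bInter_mem hSc).2 fun u hu =>
    eventually_dense_preimage_prodMk (hSo u hu) (hSd u hu)] with x hx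
  refine mem_of_superset ((countable_bInter_mem hSc).2 fun u hu =>
    residual_of_dense_open ((hSo u hu).preimage (.prodMk_right x)) (mem_iInter₂.1 hx u hu)) ?_
  exact fun y hy => hSW (mem_sInter.2 fun u hu => mem_iInter₂.1 hy u hu)

theorem Filter.EventuallyEq.eventually_residualEq_preimage_prodMk {W U : Set (X × Y)}
    (h : W =ᵇ U) : ∀ᶠ x in residual X, Prod.mk x ⁻¹' W =ᵇ Prod.mk x ⁻¹' U := by
  have hdiff : IsMeagre {p | W p = U p}ᶜ := by rwa [IsMeagre, compl_compl]
  filter_upwards [hdiff.eventually_isMeagre_preimage_prodMk] with x hx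
  rwa [IsMeagre, preimage_compl, compl_compl] at hx

theorem BaireMeasurableSet.eventually_baireMeasurableSet_preimage_prodMk {W : Set (X × Y)}
    (hW : BaireMeasurableSet W) :
    ∀ᶠ x in residual X, BaireMeasurableSet (Prod.mk x ⁻¹' W) := by
  obtain ⟨U, hU, hWU⟩ := hW.residualEq_isOpen
  filter_upwards [hWU.eventually_residualEq_preimage_prodMk] with x hx
  exact (hU.preimage (.prodMk_right x)).baireMeasurableSet.congr hx.symm

theorem isMeagre_of_eventually_isMeagre_preimage_prodMk [BaireSpace Y] {W : Set (X × Y)}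
    (hW : BaireMeasurableSet W) (h : ∀ᶠ x in residual X, IsMeagre (Prod.mk x ⁻¹' W)) :
    IsMeagre W := by
  obtain ⟨U, hU, hWU⟩ := hW.residualEq_isOpen
  have hUsec : ∀ᶠ x in residual X, Prod.mk x ⁻¹' U = ∅ := by
    filter_upwards [h, hWU.eventually_residualEq_preimage_prodMk] with x hxW hx
    exact not_nonempty_iff_eq_empty.1 fun hne =>
      not_isMeagre_of_isOpen (hU.preimage (.prodMk_right x)) hne (hxW.congr hx)
  have hN : IsMeagre {x | Prod.mk x ⁻¹' U = ∅}ᶜ := by rwa [IsMeagre, compl_compl]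
  have hUm : IsMeagre U := (hN.preimage_of_isOpenMap continuous_fst isOpenMap_fst).mono
    fun p hp (hempty : Prod.mk p.1 ⁻¹' U = ∅) => hempty.subset hp
  exact hUm.congr hWU.symm

theorem isMeagre_of_isMeagre_prod_self {A : Set Y} (h : IsMeagre (A ×ˢ A)) : IsMeagre A := by
  by_cases hA : ∃ x ∈ A, IsMeagre (Prod.mk x ⁻¹' (A ×ˢ A))
  · obtain ⟨x, hx, hxA⟩ := hA
    rwa [mk_preimage_prod_right hx] at hxA
  · push Not at hA
    have hbad : IsMeagre {x | IsMeagre (Prod.mk x ⁻¹' (A ×ˢ A))}ᶜ := by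
      rw [IsMeagre, compl_compl]
      exact h.eventually_isMeagre_preimage_prodMk
    exact hbad.mono hA

end KuratowskiUlam

section Cantor

theorem cat_mem_cylinder (n : ℕ) (u c : ℕ → Bool) : cat n u c ∈ cylinder u n :=
  fun _ hm => if_pos hm

theorem continuous_cat (n : ℕ) (u : ℕ → Bool) : Continuous (cat n u) := by
  refine continuous_pi fun m => ?_
  simp only [cat]
  split_ifs
  exacts [continuous_const, continuous_apply _]

theorem leftInverse_cat (n : ℕ) (u : ℕ → Bool) :
    Function.LeftInverse (fun y j => y (n + j)) (cat n u) := by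
  intro c
  funext j
  simp [cat]

theorem range_cat (n : ℕ) (u : ℕ → Bool) : range (cat n u) = cylinder u n := by
  refine (range_subset_iff.2 (cat_mem_cylinder n u)).antisymm fun y hy => ⟨fun j => y (n + j), ?_⟩
  funext m
  by_cases hm : m < n
  · simp [cat, hm, mem_cylinder_iff.1 hy m hm]
  · simp [cat, hm, Nat.add_sub_cancel' (not_lt.1 hm)]

theorem isOpenEmbedding_cat (n : ℕ) (u : ℕ → Bool) : IsOpenEmbedding (cat n u) where
  toIsEmbedding := (leftInverse_cat n u).isEmbedding
    (continuous_pi fun _ => continuous_apply _) (continuous_cat n u)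
  isOpen_range := range_cat n u ▸ isOpen_cylinder _ u n

theorem cons_eq_cat (i : Bool) : cons i = cat 1 (fun _ => i) := by
  funext c m
  simp [cons, cat]

theorem isOpenEmbedding_cons (i : Bool) : IsOpenEmbedding (cons i) :=
  cons_eq_cat i ▸ isOpenEmbedding_cat 1 _

/-- The Kechris–Solecki–Todorcevic lemma for `𝔾₀`. -/
theorem isMeagre_of_g0_independent {s : ℕ → ℕ → Bool} (hs : DenseStrings s)
    {A : Set (ℕ → Bool)} (hA : BaireMeasurableSet A) (hind : ∀ p ∈ G0 s, ¬ (p.1 ∈ A ∧ p.2 ∈ A)) :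
    IsMeagre A := by
  obtain ⟨U, hU, hAU⟩ := hA.residualEq_isOpen
  rcases U.eq_empty_or_nonempty with rfl | ⟨x, hx⟩
  · exact IsMeagre.empty.congr hAU.symm
  exfalso
  obtain ⟨_, ⟨y, k, rfl⟩, hxy, hkU⟩ :=
    (isTopologicalBasis_cylinders _).exists_subset_of_mem_open hx hU
  rw [← mem_cylinder_iff_eq.1 hxy] at hkU
  obtain ⟨n, hkn, hsn⟩ := hs x k
  have hnU : cylinder (s n) n ⊆ U := fun z hz =>
    hkU fun i hi => (cylinder_anti _ hkn hz i hi).trans (hsn i hi)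
  have hres : ∀ i, {c | cat n (s n) (cons i c) ∈ A} ∈ residual (ℕ → Bool) := by
    intro i
    have he := (isOpenEmbedding_cat n (s n)).comp (isOpenEmbedding_cons i)
    filter_upwards [(tendsto_residual_of_isOpenMap he.continuous he.isOpenMap).eventually
      hAU.mem_iff] with c hc
    exact hc.2 (hnU (cat_mem_cylinder _ _ _))
  obtain ⟨c, hc₀, hc₁⟩ := (dense_of_mem_residual (inter_mem (hres false) (hres true))).nonempty
  exact hind _ ⟨n, c, rfl⟩ ⟨hc₀, hc₁⟩

end Cantor

theorem meager_of_g0_disjoint_general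
    (s : ℕ → ℕ → Bool) (hs : DenseStrings s)
    (E F : (ℕ → Bool) → (ℕ → Bool) → Prop)
    (hF : Equivalence F)
    (hEbp : BaireMeasurableSet {p : (ℕ → Bool) × (ℕ → Bool) | E p.1 p.2})
    (hFbp : BaireMeasurableSet {p : (ℕ → Bool) × (ℕ → Bool) | F p.1 p.2})
    (hindex : ∀ x : ℕ → Bool, ∃ f : ℕ → (ℕ → Bool),
      ∀ y, E x y → ∃ n, E y (f n) ∧ F y (f n))
    (hdisj : ∀ p ∈ G0 s, ¬ F p.1 p.2) :
    IsMeagre {p : (ℕ → Bool) × (ℕ → Bool) | E p.1 p.2} ∧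
      IsMeagre {p : (ℕ → Bool) × (ℕ → Bool) | F p.1 p.2} := by
  have hFm : IsMeagre {p : (ℕ → Bool) × (ℕ → Bool) | F p.1 p.2} := by
    refine isMeagre_of_eventually_isMeagre_preimage_prodMk hFbp ?_
    filter_upwards [hFbp.eventually_baireMeasurableSet_preimage_prodMk] with x hx
    exact isMeagre_of_g0_independent hs hx fun p hp ⟨h₁, h₂⟩ =>
      hdisj p hp (hF.trans (hF.symm h₁) h₂)
  have hFclass : ∀ x, IsMeagre {y | F x y} := fun x =>
    isMeagre_of_isMeagre_prod_self <| hFm.mono fun p ⟨h₁, h₂⟩ => hF.trans (hF.symm h₁) h₂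
  have hEclass : ∀ x, IsMeagre {y | E x y} := fun x => by
    obtain ⟨f, hf⟩ := hindex x
    refine (isMeagre_iUnion fun n => hFclass (f n)).mono fun y hy => ?_
    obtain ⟨n, -, hFy⟩ := hf y hy
    exact mem_iUnion.2 ⟨n, hF.symm hFy⟩
  exact ⟨isMeagre_of_eventually_isMeagre_preimage_prodMk hEbp (.of_forall hEclass), hFm⟩

theorem meager_of_g0_disjoint
    (s : ℕ → ℕ → Bool) (hs : DenseStrings s)
    (E F : (ℕ → Bool) → (ℕ → Bool) → Prop)
    (hE : Equivalence E) (hF : Equivalence F)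
    (hEbp : BaireMeasurableSet {p : (ℕ → Bool) × (ℕ → Bool) | E p.1 p.2})
    (hFbp : BaireMeasurableSet {p : (ℕ → Bool) × (ℕ → Bool) | F p.1 p.2})
    (hindex : ∀ x : ℕ → Bool, ∃ f : ℕ → (ℕ → Bool),
      ∀ y, E x y → ∃ n, E y (f n) ∧ F y (f n))
    (hdisj : ∀ p ∈ G0 s, ¬ F p.1 p.2) :
    IsMeagre {p : (ℕ → Bool) × (ℕ → Bool) | E p.1 p.2} ∧
      IsMeagre {p : (ℕ → Bool) × (ℕ → Bool) | F p.1 p.2} :=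
  meager_of_g0_disjoint_general s hs E F hF hEbp hFbp hindex hdisj
end

section
/- For k ≥ 2, the equivalence relation F₀(k) on Cantor space is generically ergodic: every F₀(k)-invariant subset of 2^ℕ with the Baire property is meager or comeager. Here c F₀(k) d iff there exists n such that for all m ≥ n, Σ_{i<m} c(i) ≡ Σ_{i<m} d(i) (mod k). -/
/-!
If `B` is not meagre, its Baire property makes it comeagre in some basic cylinder, and likewise
for `Bᶜ` if that is not meagre. Concatenating the two prefixes in both orders yields two words of
the same length with the same number of ones; they determine subcylinders of the two cylinders,
and the homeomorphism replacing one prefix by the other keeps the tail and the number of ones in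
the prefix, so it preserves `F₀(k)`-classes and hence `B`. It therefore carries a nonempty open set on which
`B` is comeagre onto one on which `Bᶜ` is comeagre, which is impossible in a Baire space.
-/

open Finset in
/-- The index-`k` subrelation `F₀(k)` of `E₀`: eventual agreement of partial
sums modulo `k`. -/
def F0 (k : ℕ) (c d : ℕ → Bool) : Prop :=
  ∃ n : ℕ, ∀ m ≥ n,
    (∑ i ∈ range m, (c i).toNat) % k = (∑ i ∈ range m, (d i).toNat) % k

open Set PiNat

section GenericErgodicity

variable {X : Type*} [TopologicalSpace X]

theorem BaireMeasurableSet.exists_isOpen_isMeagre_diff {B : Set X} (hB : BaireMeasurableSet B)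
    (hBm : ¬IsMeagre B) : ∃ U, IsOpen U ∧ U.Nonempty ∧ IsMeagre (U \ B) := by
  obtain ⟨U, hUo, hBU⟩ := hB.residualEq_isOpen
  rcases U.eq_empty_or_nonempty with rfl | hUne
  · exact absurd (hBU.mem_iff.mono fun x hx hxB => (hx.1 hxB).elim) hBm
  · exact ⟨U, hUo, hUne, hBU.mem_iff.mono fun x hx hxUB => hxUB.2 (hx.2 hxUB.1)⟩

theorem isMeagre_or_isMeagre_compl_of_forall_exists_mapsTo [BaireSpace X] (E : X → X → Prop)
    (hE : ∀ U V : Set X, IsOpen U → U.Nonempty → IsOpen V → V.Nonempty →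
      ∃ W, IsOpen W ∧ W.Nonempty ∧ W ⊆ U ∧
        ∃ g : X → X, Continuous g ∧ IsOpenMap g ∧ MapsTo g W V ∧ ∀ x ∈ W, E x (g x))
    {B : Set X} (hBinv : ∀ x y, E x y → (x ∈ B ↔ y ∈ B)) (hB : BaireMeasurableSet B) :
    IsMeagre B ∨ IsMeagre Bᶜ := by
  by_contra! h
  obtain ⟨U, hUo, hUne, hUB⟩ := hB.exists_isOpen_isMeagre_diff h.1
  obtain ⟨V, hVo, hVne, hVB⟩ := hB.compl.exists_isOpen_isMeagre_diff h.2
  obtain ⟨W, hWo, hWne, hWU, g, hgc, hgo, hgWV, hgE⟩ := hE U V hUo hUne hVo hVne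
  have hWcover : W ⊆ (U \ B) ∪ g ⁻¹' (V \ Bᶜ) := by
    intro x hx
    by_cases hxB : x ∈ B
    · exact Or.inr ⟨hgWV hx, not_not.2 ((hBinv x (g x) (hgE x hx)).1 hxB)⟩
    · exact Or.inl ⟨hWU hx, hxB⟩
  exact not_isMeagre_of_isOpen hWo hWne
    ((hUB.union (hVB.preimage_of_isOpenMap hgc hgo)).mono hWcover)

end GenericErgodicity

section Cylinders

variable {α : Type*}

theorem exists_cylinder_subset [TopologicalSpace α] [DiscreteTopology α] {U : Set (ℕ → α)}
    (hU : IsOpen U) (hUne : U.Nonempty) : ∃ x n, cylinder x n ⊆ U := by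
  obtain ⟨x, hx⟩ := hUne
  obtain ⟨_, ⟨y, n, rfl⟩, -, hsub⟩ :=
    (isTopologicalBasis_cylinders fun _ => α).exists_subset_of_mem_open hx hU
  exact ⟨y, n, hsub⟩

theorem exists_homeomorph_mapsTo_cylinder [TopologicalSpace α] [DiscreteTopology α]
    [DecidableEq α] (x y : ℕ → α) (N : ℕ) :
    ∃ g : (ℕ → α) ≃ₜ (ℕ → α), MapsTo g (cylinder x N) (cylinder y N) ∧
      ∀ c, ∀ i ≥ N, g c i = c i := by
  refine ⟨Homeomorph.piCongrRight fun i =>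
    (if i < N then Equiv.swap (x i) (y i) else Equiv.refl α).toHomeomorphOfDiscrete, ?_, ?_⟩
  · intro c hc i hi
    simp [Homeomorph.piCongrRight, Equiv.toHomeomorphOfDiscrete, hi, mem_cylinder_iff.1 hc i hi]
  · intro c i hi
    simp [Homeomorph.piCongrRight, Equiv.toHomeomorphOfDiscrete, not_lt.2 hi]

def prependPrefix (x : ℕ → α) (n : ℕ) (z : ℕ → α) : ℕ → α :=
  fun i => if i < n then x i else z (i - n)

theorem prependPrefix_mem_cylinder (x : ℕ → α) (n : ℕ) (z : ℕ → α) :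
    prependPrefix x n z ∈ cylinder x n :=
  fun _ hi => if_pos hi

theorem sum_range_prependPrefix {M : Type*} [AddCommMonoid M] (f : α → M) (x : ℕ → α)
    (n : ℕ) (z : ℕ → α) (m : ℕ) :
    ∑ i ∈ Finset.range (n + m), f (prependPrefix x n z i) =
      ∑ i ∈ Finset.range n, f (x i) + ∑ i ∈ Finset.range m, f (z i) := by
  rw [Finset.sum_range_add]
  congr 1
  · exact Finset.sum_congr rfl fun i hi => by simp [prependPrefix, Finset.mem_range.1 hi]
  · simp [prependPrefix]

theorem sum_range_eq_of_mem_cylinder {M : Type*} [AddCommMonoid M] (f : α → M) {x c : ℕ → α}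
    {n : ℕ} (hc : c ∈ cylinder x n) :
    ∑ i ∈ Finset.range n, f (c i) = ∑ i ∈ Finset.range n, f (x i) :=
  Finset.sum_congr rfl fun i hi => by rw [mem_cylinder_iff.1 hc i (Finset.mem_range.1 hi)]

end Cylinders

theorem F0_of_sum_range_eq_of_forall_ge {k N : ℕ} {c d : ℕ → Bool}
    (hsum : (∑ i ∈ Finset.range N, (c i).toNat) % k = (∑ i ∈ Finset.range N, (d i).toNat) % k)
    (htail : ∀ i ≥ N, c i = d i) : F0 k c d := by
  refine ⟨N, fun m hm => ?_⟩
  obtain ⟨j, rfl⟩ := Nat.exists_eq_add_of_le hm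
  simp only [Finset.sum_range_add, Nat.add_mod _ (∑ i ∈ Finset.range j, _), hsum,
    htail _ (Nat.le_add_right N _)]

theorem exists_F0_homeomorph_mapsTo_cylinder (k : ℕ) (x y : ℕ → Bool) (n m : ℕ) :
    ∃ W, IsOpen W ∧ W.Nonempty ∧ W ⊆ cylinder x n ∧
      ∃ g : (ℕ → Bool) ≃ₜ (ℕ → Bool), MapsTo g W (cylinder y m) ∧ ∀ c ∈ W, F0 k c (g c) := by
  set x' := prependPrefix x n y
  set y' := prependPrefix y m x
  have hsum : ∑ i ∈ Finset.range (n + m), (x' i).toNat =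
      ∑ i ∈ Finset.range (n + m), (y' i).toNat := by
    rw [sum_range_prependPrefix, add_comm n m, sum_range_prependPrefix, add_comm]
  obtain ⟨g, hg, hgtail⟩ := exists_homeomorph_mapsTo_cylinder x' y' (n + m)
  refine ⟨cylinder x' (n + m), isOpen_cylinder _ _ _, ⟨x', self_mem_cylinder _ _⟩, ?_, g, ?_, ?_⟩
  · exact (cylinder_anti x' (Nat.le_add_right n m)).trans
      (mem_cylinder_iff_eq.1 (prependPrefix_mem_cylinder x n y)).le
  · exact fun c hc => (mem_cylinder_iff_eq.1 (prependPrefix_mem_cylinder y m x)).subset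
      (cylinder_anti y' (Nat.le_add_left m n) (hg hc))
  · intro c hc
    refine F0_of_sum_range_eq_of_forall_ge (N := n + m) ?_ fun i hi => (hgtail c i hi).symm
    rw [sum_range_eq_of_mem_cylinder _ hc, sum_range_eq_of_mem_cylinder _ (hg hc), hsum]

theorem f0_generically_ergodic_general (k : ℕ)
    (B : Set (ℕ → Bool)) (hBinv : ∀ c d, F0 k c d → (c ∈ B ↔ d ∈ B))
    (hBbp : BaireMeasurableSet B) :
    IsMeagre B ∨ IsMeagre Bᶜ := by
  refine isMeagre_or_isMeagre_compl_of_forall_exists_mapsTo (F0 k) ?_ hBinv hBbp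
  intro U V hU hUne hV hVne
  obtain ⟨x, n, hxU⟩ := exists_cylinder_subset hU hUne
  obtain ⟨y, m, hyV⟩ := exists_cylinder_subset hV hVne
  obtain ⟨W, hWo, hWne, hWx, g, hgWy, hgF⟩ := exists_F0_homeomorph_mapsTo_cylinder k x y n m
  exact ⟨W, hWo, hWne, hWx.trans hxU, g, g.continuous, g.isOpenMap, hgWy.mono_right hyV, hgF⟩

/-- `F₀(k)` is generically ergodic. -/
theorem f0_generically_ergodic (k : ℕ) (hk : 2 ≤ k)
    (B : Set (ℕ → Bool)) (hBinv : ∀ c d, F0 k c d → (c ∈ B ↔ d ∈ B))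
    (hBbp : BaireMeasurableSet B) :
    IsMeagre B ∨ IsMeagre Bᶜ :=
  f0_generically_ergodic_general k B hBinv hBbp
end

section
/- Suppose X is a Baire space, E is an equivalence relation on X such that E-saturations of meager sets are meager, F is a generically ergodic subequivalence relation of E, and B ⊆ X is an F-invariant set with the Baire property whose complement is E-complete (i.e., the E-saturation of the complement is all of X). Then B is meager. -/
theorem meager_of_generically_ergodic_complete_complement_general
    (X : Type) [TopologicalSpace X]
    (E F : X → X → Prop)
    (hsat : ∀ M : Set X, IsMeagre M → IsMeagre {x | ∃ y ∈ M, E x y})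
    (hergodic : ∀ A : Set X, (∀ a b, F a b → (a ∈ A ↔ b ∈ A)) →
      BaireMeasurableSet A → IsMeagre A ∨ IsMeagre Aᶜ)
    (B : Set X) (hBinv : ∀ a b, F a b → (a ∈ B ↔ b ∈ B))
    (hBbp : BaireMeasurableSet B)
    (hcomplete : ∀ x : X, ∃ y, y ∉ B ∧ E x y) :
    IsMeagre B := by
  rcases hergodic B hBinv hBbp with hB | hBc
  · exact hB
  · -- `B` lies in the `E`-saturation of `Bᶜ`, which is the whole space and meagre.
    exact (hsat Bᶜ hBc).mono fun x _ => hcomplete x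

theorem meager_of_generically_ergodic_complete_complement
    (X : Type) [TopologicalSpace X] [BaireSpace X]
    (E F : X → X → Prop) (hE : Equivalence E) (hF : Equivalence F)
    (hFE : ∀ a b, F a b → E a b)
    (hsat : ∀ M : Set X, IsMeagre M → IsMeagre {x | ∃ y ∈ M, E x y})
    (hergodic : ∀ A : Set X, (∀ a b, F a b → (a ∈ A ↔ b ∈ A)) →
      BaireMeasurableSet A → IsMeagre A ∨ IsMeagre Aᶜ)
    (B : Set X) (hBinv : ∀ a b, F a b → (a ∈ B ↔ b ∈ B))
    (hBbp : BaireMeasurableSet B)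
    (hcomplete : ∀ x : X, ∃ y, y ∉ B ∧ E x y) :
    IsMeagre B :=
  meager_of_generically_ergodic_complete_complement_general X E F hsat hergodic B hBinv hBbp
    hcomplete
end

section
/- Let k ≥ 2, let D be a closed nowhere-dense binary relation on 2^ℕ, and let R be a meager binary relation on 2^ℕ. Then there is a continuous function φ : 2^ℕ → 2^ℕ such that: (i) (φ×φ) maps the complement of the diagonal into the complement of D; (ii) φ is a reduction of F₀(k) to F₀(k) on E₀-related pairs, i.e., for c E₀ d, c F₀(k) d iff φ(c) F₀(k) φ(d), and φ(c) E₀ φ(d); (iii) (φ×φ) maps the complement of E₀ into the complement of R. -/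
namespace E0F0Aux

abbrev X := ℕ → Bool

def bsum (l : List Bool) : ℕ := (l.map Bool.toNat).sum

lemma bsum_append (l₁ l₂ : List Bool) : bsum (l₁ ++ l₂) = bsum l₁ + bsum l₂ := by
  simp [bsum]

lemma bsum_replicate_true (n : ℕ) : bsum (List.replicate n true) = n := by
  simp [bsum]

lemma bsum_replicate_false (n : ℕ) : bsum (List.replicate n false) = 0 := by
  simp [bsum]

def Cyl (u : List Bool) : Set X := {x | ∀ i < u.length, x i = u.getD i false}

lemma Cyl_append (u v : List Bool) : Cyl (u ++ v) ⊆ Cyl u := by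
  intro x hx i hi
  have h := hx i (by simp; omega)
  rwa [List.getD_append _ _ _ _ hi] at h

lemma isOpen_Cyl (u : List Bool) : IsOpen (Cyl u) := by
  have : Cyl u = ⋂ i ∈ Finset.range u.length, (fun x : X => x i) ⁻¹' {u.getD i false} := by
    ext x; simp [Cyl]
  rw [this]
  refine isOpen_biInter_finset fun i _ => ?_
  exact (isOpen_discrete _).preimage (continuous_apply i)

lemma Cyl_nonempty (u : List Bool) : (Cyl u).Nonempty :=
  ⟨fun i => u.getD i false, fun _ _ => rfl⟩

lemma getD_map_range (g : ℕ → Bool) {m j : ℕ} (hj : j < m) :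
    ((List.range m).map g).getD j false = g j := by
  rw [List.getD_eq_getElem _ _ (by simpa using hj)]
  simp

/-- Basic clopen neighborhoods in Cantor space. -/
lemma exists_basic {U : Set X} (hU : IsOpen U) {x : X} (hx : x ∈ U) :
    ∃ n, ∀ y : X, (∀ i < n, y i = x i) → y ∈ U := by
  obtain ⟨I, u, h1, h2⟩ := isOpen_pi_iff.mp hU x hx
  refine ⟨(I.sup id) + 1, fun y hy => h2 ?_⟩
  intro i hi
  rw [Finset.mem_coe] at hi
  have hle : i ≤ I.sup id := Finset.le_sup (f := id) hi
  rw [hy i (by omega)]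
  exact (h1 i hi).2

/-- Two-sided density extension. -/
lemma dense_ext {G : Set (X × X)} (hGo : IsOpen G) (hGd : Dense G) (u v : List Bool) :
    ∃ e f : List Bool, Cyl (u ++ e) ×ˢ Cyl (v ++ f) ⊆ G := by
  obtain ⟨p, hpG, hp⟩ := hGd.exists_mem_open ((isOpen_Cyl u).prod (isOpen_Cyl v))
    ((Cyl_nonempty u).prod (Cyl_nonempty v))
  obtain ⟨hpu, hpv⟩ := hp
  obtain ⟨A, B, hAo, hBo, hpA, hpB, hAB⟩ := isOpen_prod_iff.mp hGo p.1 p.2 hpG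
  obtain ⟨n₁, hn₁⟩ := exists_basic hAo hpA
  obtain ⟨n₂, hn₂⟩ := exists_basic hBo hpB
  set n := max (max n₁ n₂) (max u.length v.length) with hn
  refine ⟨(List.range (n - u.length)).map (fun j => p.1 (u.length + j)),
          (List.range (n - v.length)).map (fun j => p.2 (v.length + j)), ?_⟩
  rintro ⟨z₁, z₂⟩ ⟨hz₁, hz₂⟩
  have key : ∀ (w : List Bool) (q : X) (z : X), q ∈ Cyl w →
      z ∈ Cyl (w ++ (List.range (n - w.length)).map (fun j => q (w.length + j))) →
      ∀ i < n, z i = q i := by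
    intro w q z hq hz i hi
    have hlen : (w ++ (List.range (n - w.length)).map (fun j => q (w.length + j))).length
        = w.length + (n - w.length) := by simp
    rcases lt_or_ge i w.length with h | h
    · have := hz i (by omega)
      rw [List.getD_append _ _ _ _ h] at this
      rw [this]; exact (hq i h).symm
    · have := hz i (by omega)
      rw [List.getD_append_right _ _ _ _ h] at this
      rw [getD_map_range _ (by omega)] at this
      rw [this]
      congr 1
      omega
  have hz₁' : ∀ i < n, z₁ i = p.1 i := key u p.1 z₁ hpu hz₁
  have hz₂' : ∀ i < n, z₂ i = p.2 i := key v p.2 z₂ hpv hz₂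
  exact hAB ⟨hn₁ z₁ (fun i hi => hz₁' i (by omega)), hn₂ z₂ (fun i hi => hz₂' i (by omega))⟩

/-- Iterated extension handling finitely many pair-constraints. -/
lemma multi_ext {G : Set (X × X)} (hGo : IsOpen G) (hGd : Dense G)
    (S : Finset ((List Bool × Bool) × (List Bool × Bool))) :
    ∃ w : Bool → List Bool, ∀ c ∈ S, c.1.2 ≠ c.2.2 →
      Cyl (c.1.1 ++ w c.1.2) ×ˢ Cyl (c.2.1 ++ w c.2.2) ⊆ G := by
  classical
  induction S using Finset.induction with
  | empty => exact ⟨fun _ => [], by simp⟩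
  | @insert c S hni ih =>
    obtain ⟨w, hw⟩ := ih
    by_cases hc : c.1.2 = c.2.2
    · refine ⟨w, fun c' hc' hne => ?_⟩
      rcases Finset.mem_insert.mp hc' with h | h
      · exact absurd (h ▸ hc) hne
      · exact hw c' h hne
    · obtain ⟨e, f, hef⟩ := dense_ext hGo hGd (c.1.1 ++ w c.1.2) (c.2.1 ++ w c.2.2)
      refine ⟨fun b => if b = c.1.2 then w b ++ e else w b ++ f, fun c' hc' hne => ?_⟩
      have hmono : ∀ b, ∃ t, (if b = c.1.2 then w b ++ e else w b ++ f) = w b ++ t :=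
        fun b => by by_cases h : b = c.1.2 <;> simp [h]
      rcases Finset.mem_insert.mp hc' with h | h
      · subst h
        beta_reduce
        rw [if_pos rfl, if_neg (Ne.symm hc), ← List.append_assoc, ← List.append_assoc]
        exact hef
      · obtain ⟨t₁, ht₁⟩ := hmono c'.1.2
        obtain ⟨t₂, ht₂⟩ := hmono c'.2.2
        beta_reduce
        rw [ht₁, ht₂, ← List.append_assoc, ← List.append_assoc]
        exact subset_trans (Set.prod_mono (Cyl_append _ _) (Cyl_append _ _)) (hw c' h hne)

/-- The prefix of the image built from blocks `V`. -/
def pre (V : ℕ → Bool → List Bool) (c : X) (m : ℕ) : List Bool :=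
  (List.range m).flatMap fun i => V i (c i)

lemma pre_succ (V : ℕ → Bool → List Bool) (c : X) (m : ℕ) :
    pre V c (m + 1) = pre V c m ++ V m (c m) := by
  simp [pre, List.range_succ]

lemma pre_congr {V W : ℕ → Bool → List Bool} {c d : X} {m : ℕ}
    (h : ∀ i < m, V i (c i) = W i (d i)) : pre V c m = pre W d m := by
  unfold pre
  refine List.flatMap_congr ?_
  intro i hi
  exact h i (List.mem_range.mp hi)

lemma pre_split (V : ℕ → Bool → List Bool) (c : X) {a b : ℕ} (h : a ≤ b) :
    pre V c b = pre V c a ++ (List.range (b - a)).flatMap (fun j => V (a + j) (c (a + j))) := by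
  obtain ⟨e, rfl⟩ : ∃ e, b = a + e := ⟨b - a, by omega⟩
  rw [show a + e - a = e by omega]
  unfold pre
  rw [List.range_add, List.flatMap_append, List.flatMap_map]

lemma mod_trick {k : ℕ} (hk : 0 < k) (s t : ℕ) (ht : t < k) :
    (s + (if s % k ≤ t then t - s % k else k + t - s % k)) % k = t := by
  have h1 : s % k < k := Nat.mod_lt _ hk
  set r := (if s % k ≤ t then t - s % k else k + t - s % k) with hr
  have hrk : r < k := by rw [hr]; split <;> omega
  rw [Nat.add_mod, Nat.mod_eq_of_lt hrk]
  by_cases h : s % k ≤ t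
  · rw [hr, if_pos h, show s % k + (t - s % k) = t by omega, Nat.mod_eq_of_lt ht]
  · rw [hr, if_neg h, show s % k + (k + t - s % k) = k + t by omega,
      Nat.add_mod_left, Nat.mod_eq_of_lt ht]

/-- Padding a pair of strings to equal length and prescribed digit sums mod `k`. -/
lemma adjust (k : ℕ) (hk : 2 ≤ k) (w : Bool → List Bool) :
    ∃ p : Bool → List Bool,
      ((w false ++ p false).length = (w true ++ p true).length) ∧
      (0 < (w false ++ p false).length) ∧
      (∀ b, bsum (w b ++ p b) % k = b.toNat) := by
  set N := max (w false).length (w true).length with hN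
  have hkpos : 0 < k := by omega
  refine ⟨fun b =>
    List.replicate (N - (w b).length) false ++
    List.replicate (if bsum (w b) % k ≤ b.toNat then b.toNat - bsum (w b) % k
      else k + b.toNat - bsum (w b) % k) true ++
    List.replicate (k - (if bsum (w b) % k ≤ b.toNat then b.toNat - bsum (w b) % k
      else k + b.toNat - bsum (w b) % k)) false, ?_, ?_, ?_⟩
  · have hf : (w false).length ≤ N := le_max_left _ _
    have ht : (w true).length ≤ N := le_max_right _ _
    have h1 : bsum (w false) % k < k := Nat.mod_lt _ hkpos
    have h2 : bsum (w true) % k < k := Nat.mod_lt _ hkpos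
    have h3 : (false : Bool).toNat < k := lt_of_lt_of_le (Bool.toNat_lt _) hk
    have h4 : (true : Bool).toNat < k := lt_of_lt_of_le (Bool.toNat_lt _) hk
    simp only [List.length_append, List.length_replicate]
    split <;> split <;> omega
  · have hf : (w false).length ≤ N := le_max_left _ _
    have h1 : bsum (w false) % k < k := Nat.mod_lt _ hkpos
    simp only [List.length_append, List.length_replicate]
    split <;> omega
  · intro b
    have h2 : b.toNat < k := lt_of_lt_of_le (Bool.toNat_lt b) hk
    have key := mod_trick (k := k) hkpos (bsum (w b)) b.toNat h2
    have h1 : bsum (w b) % k < k := Nat.mod_lt _ hkpos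
    simp only [bsum_append, bsum_replicate_true, bsum_replicate_false]
    simp only [Nat.zero_add, Nat.add_zero]
    exact key

/-- One stage of the fusion construction. -/
lemma stage (k : ℕ) (hk : 2 ≤ k) (G : Set (X × X)) (hGo : IsOpen G) (hGd : Dense G)
    (P : ℕ → Bool → List Bool) (m : ℕ) :
    ∃ w : Bool → List Bool,
      ((w false).length = (w true).length) ∧ (0 < (w false).length) ∧
      (∀ b, bsum (w b) % k = b.toNat) ∧
      (∀ a b : X, a m ≠ b m →
        Cyl (pre P a m ++ w (a m)) ×ˢ Cyl (pre P b m ++ w (b m)) ⊆ G) := by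
  classical
  obtain ⟨w, hw⟩ := multi_ext hGo hGd
    (Finset.image (fun p : (Fin (m + 1) → Bool) × (Fin (m + 1) → Bool) =>
      ((pre P (fun i => if h : i < m + 1 then p.1 ⟨i, h⟩ else false) m, p.1 (Fin.last m)),
       (pre P (fun i => if h : i < m + 1 then p.2 ⟨i, h⟩ else false) m, p.2 (Fin.last m))))
      Finset.univ)
  obtain ⟨p, hp1, hp2, hp3⟩ := adjust k hk w
  refine ⟨fun b => w b ++ p b, hp1, hp2, hp3, ?_⟩
  intro a b hab
  have hmem := Finset.mem_image_of_mem
    (fun p : (Fin (m + 1) → Bool) × (Fin (m + 1) → Bool) =>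
      ((pre P (fun i => if h : i < m + 1 then p.1 ⟨i, h⟩ else false) m, p.1 (Fin.last m)),
       (pre P (fun i => if h : i < m + 1 then p.2 ⟨i, h⟩ else false) m, p.2 (Fin.last m))))
    (Finset.mem_univ ((fun i => a i, fun i => b i) :
      (Fin (m + 1) → Bool) × (Fin (m + 1) → Bool)))
  have hne : (fun i : Fin (m + 1) => a i) (Fin.last m) ≠ (fun i : Fin (m + 1) => b i) (Fin.last m) := by
    simpa [Fin.val_last] using hab
  have hbox := hw _ hmem hne
  dsimp only at hbox
  have hpre1 : pre P (fun i => if h : i < m + 1 then a (((⟨i, h⟩ : Fin (m+1)) : ℕ)) else false) m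
      = pre P a m := pre_congr fun i hi => by rw [dif_pos (by omega : i < m + 1)]
  have hpre2 : pre P (fun i => if h : i < m + 1 then b (((⟨i, h⟩ : Fin (m+1)) : ℕ)) else false) m
      = pre P b m := pre_congr fun i hi => by rw [dif_pos (by omega : i < m + 1)]
  rw [Fin.val_last, hpre1, hpre2] at hbox
  beta_reduce
  rw [← List.append_assoc, ← List.append_assoc]
  exact subset_trans (Set.prod_mono (Cyl_append _ _) (Cyl_append _ _)) hbox

/-- The full fusion sequence of blocks. -/
lemma exists_V (k : ℕ) (hk : 2 ≤ k) (G : ℕ → Set (X × X))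
    (hGo : ∀ m, IsOpen (G m)) (hGd : ∀ m, Dense (G m)) :
    ∃ V : ℕ → Bool → List Bool,
      (∀ m, (V m false).length = (V m true).length) ∧
      (∀ m, 0 < (V m false).length) ∧
      (∀ m b, bsum (V m b) % k = b.toNat) ∧
      (∀ m, ∀ a b : X, a m ≠ b m →
        Cyl (pre V a (m + 1)) ×ˢ Cyl (pre V b (m + 1)) ⊆ G m) := by
  classical
  let step : (ℕ → Bool → List Bool) → ℕ → (Bool → List Bool) := fun P m =>
    Classical.choose (stage k hk (G m) (hGo m) (hGd m) P m)
  let H : ℕ → (ℕ → Bool → List Bool) := fun m =>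
    Nat.rec (fun _ _ => [true]) (fun m' ih => Function.update ih m' (step ih m')) m
  have hHsucc : ∀ m, H (m + 1) = Function.update (H m) m (step (H m) m) := fun _ => rfl
  let V : ℕ → Bool → List Bool := fun m => H (m + 1) m
  have hVdef : ∀ m, V m = step (H m) m := by
    intro m
    show Function.update (H m) m (step (H m) m) m = _
    rw [Function.update_self]
  have hstab : ∀ m i, i < m → H m i = V i := by
    intro m
    induction m with
    | zero => omega
    | succ m ih =>
      intro i hi
      rcases Nat.lt_succ_iff_lt_or_eq.mp hi with h | h
      · rw [hHsucc, Function.update_of_ne (by omega)]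
        exact ih i h
      · subst h; rfl
  have hpreH : ∀ m (a : X), pre (H m) a m = pre V a m := by
    intro m a
    exact pre_congr fun i hi => congrFun (hstab m i hi) (a i)
  have spec : ∀ m,
      ((V m false).length = (V m true).length) ∧ (0 < (V m false).length) ∧
      (∀ b, bsum (V m b) % k = b.toNat) ∧
      (∀ a b : X, a m ≠ b m →
        Cyl (pre (H m) a m ++ V m (a m)) ×ˢ Cyl (pre (H m) b m ++ V m (b m)) ⊆ G m) := by
    intro m
    rw [hVdef m]
    exact Classical.choose_spec (stage k hk (G m) (hGo m) (hGd m) (H m) m)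
  refine ⟨V, fun m => (spec m).1, fun m => (spec m).2.1, fun m => (spec m).2.2.1, ?_⟩
  intro m a b hab
  have h4 := (spec m).2.2.2 a b hab
  rwa [hpreH m a, hpreH m b, ← pre_succ, ← pre_succ] at h4

/-- The limit map determined by the blocks `V`. -/
def philim (V : ℕ → Bool → List Bool) (c : X) : X :=
  fun n => (pre V c (n + 1)).getD n false

/-- Total length of the first `m` blocks. -/
def L (V : ℕ → Bool → List Bool) (m : ℕ) : ℕ :=
  ∑ i ∈ Finset.range m, (V i false).length

section WithV

variable {V : ℕ → Bool → List Bool}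
variable (hlen : ∀ m, (V m false).length = (V m true).length)
variable (hpos : ∀ m, 0 < (V m false).length)

include hlen in
lemma block_length (m : ℕ) (b : Bool) : (V m b).length = (V m false).length := by
  cases b
  · rfl
  · exact (hlen m).symm

include hlen in
lemma pre_length (c : X) (m : ℕ) : (pre V c m).length = L V m := by
  induction m with
  | zero => rfl
  | succ m ih =>
    rw [pre_succ, List.length_append, ih, block_length hlen]
    unfold L
    rw [Finset.sum_range_succ]

lemma L_mono {a b : ℕ} (h : a ≤ b) : L V a ≤ L V b :=
  Finset.sum_le_sum_of_subset (Finset.range_subset_range.mpr h)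

include hpos in
lemma le_L (m : ℕ) : m ≤ L V m := by
  induction m with
  | zero => omega
  | succ m ih =>
    unfold L at ih ⊢
    rw [Finset.sum_range_succ]
    have := hpos m
    omega

include hlen hpos in
lemma phi_spec (c : X) {M i : ℕ} (hi : i < L V M) :
    philim V c i = (pre V c M).getD i false := by
  rcases le_total (i + 1) M with h | h
  · rw [pre_split V c h, List.getD_append]
    · rfl
    · rw [pre_length hlen]
      exact lt_of_lt_of_le (Nat.lt_succ_self i) (le_trans (le_L hpos (i+1)) (le_refl _))
  · unfold philim
    rw [pre_split V c h, List.getD_append]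
    rw [pre_length hlen]
    exact hi

include hlen hpos in
lemma phi_mem_Cyl (c : X) (M : ℕ) : philim V c ∈ Cyl (pre V c M) := by
  intro i hi
  rw [pre_length hlen] at hi
  exact phi_spec hlen hpos c hi

include hlen hpos in
lemma phi_tail_eq {c d : X} {n : ℕ} (h : ∀ j ≥ n, c j = d j) {i : ℕ} (hi : L V n ≤ i) :
    philim V c i = philim V d i := by
  have hn1 : n ≤ i + 1 := by
    have := le_L hpos (V := V) n
    omega
  have htail : (List.range (i + 1 - n)).flatMap (fun j => V (n + j) (c (n + j)))
      = (List.range (i + 1 - n)).flatMap (fun j => V (n + j) (d (n + j))) :=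
    List.flatMap_congr fun j _ => by rw [h (n + j) (by omega)]
  unfold philim
  rw [pre_split V c hn1, pre_split V d hn1,
    List.getD_append_right _ _ _ _ (by rw [pre_length hlen]; exact hi),
    List.getD_append_right _ _ _ _ (by rw [pre_length hlen]; exact hi),
    pre_length hlen, pre_length hlen, htail]

lemma sum_getD (l : List Bool) :
    ∑ j ∈ Finset.range l.length, (l.getD j false).toNat = bsum l := by
  induction l with
  | nil => rfl
  | cons a l ih =>
    rw [List.length_cons, Finset.sum_range_succ']
    simp only [List.getD_cons_succ, List.getD_cons_zero]
    rw [ih]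
    show bsum l + a.toNat = bsum (a :: l)
    have : bsum (a :: l) = a.toNat + bsum l := by simp [bsum]
    omega

include hlen hpos in
lemma phi_sum (c : X) (m : ℕ) :
    ∑ j ∈ Finset.range (L V m), (philim V c j).toNat = bsum (pre V c m) := by
  rw [← sum_getD (pre V c m), pre_length hlen]
  refine Finset.sum_congr rfl fun j hj => ?_
  rw [phi_spec hlen hpos c (Finset.mem_range.mp hj)]

variable {k : ℕ} (hk : 2 ≤ k)
variable (hsum : ∀ m b, bsum (V m b) % k = b.toNat)

include hk hsum in
lemma pre_mod (c : X) (m : ℕ) :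
    bsum (pre V c m) % k = (∑ i ∈ Finset.range m, (c i).toNat) % k := by
  induction m with
  | zero => rfl
  | succ m ih =>
    have hcm : (c m).toNat % k = (c m).toNat :=
      Nat.mod_eq_of_lt (lt_of_lt_of_le (Bool.toNat_lt (c m)) hk)
    rw [pre_succ, bsum_append, Finset.sum_range_succ]
    calc (bsum (pre V c m) + bsum (V m (c m))) % k
        = (bsum (pre V c m) % k + bsum (V m (c m)) % k) % k := Nat.add_mod _ _ _
      _ = ((∑ i ∈ Finset.range m, (c i).toNat) % k + (c m).toNat % k) % k := by
          rw [ih, hsum m (c m), hcm]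
      _ = (∑ i ∈ Finset.range m, (c i).toNat + (c m).toNat) % k := (Nat.add_mod _ _ _).symm

lemma philim_continuous : Continuous (philim V) := by
  refine continuous_pi fun n => ?_
  have : (fun c => philim V c n) =
      (fun g : Fin (n + 1) → Bool =>
        (pre V (fun i => if h : i < n + 1 then g ⟨i, h⟩ else false) (n + 1)).getD n false) ∘
      (fun c i => c i) := by
    funext c
    show philim V c n = _
    unfold philim
    congr 1
    exact pre_congr fun i hi => by rw [dif_pos (by omega : i < n + 1)]
  rw [this]
  exact (continuous_of_discreteTopology).comp (continuous_pi fun i => continuous_apply (i : ℕ))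

end WithV

end E0F0Aux

open E0F0Aux

theorem exists_homomorphism_avoiding_nowhere_dense_and_meager
    (k : ℕ) (hk : 2 ≤ k)
    (D : Set ((ℕ → Bool) × (ℕ → Bool))) (hDclosed : IsClosed D)
    (hDnwd : IsNowhereDense D)
    (R : Set ((ℕ → Bool) × (ℕ → Bool))) (hR : IsMeagre R) :
    ∃ φ : (ℕ → Bool) → (ℕ → Bool), Continuous φ ∧
      (∀ c d, c ≠ d → (φ c, φ d) ∉ D) ∧
      (∀ c d, E0 c d → ((F0 k c d ↔ F0 k (φ c) (φ d)) ∧ E0 (φ c) (φ d))) ∧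
      (∀ c d, ¬ E0 c d → (φ c, φ d) ∉ R) := by
  classical
  obtain ⟨hDo, hDd⟩ := isClosed_isNowhereDense_iff_compl.mp ⟨hDclosed, hDnwd⟩
  obtain ⟨S, hSo, hSd, hScnt, hSsub⟩ := mem_residual_iff.mp hR
  obtain ⟨Vo, hVoo, hVod, hVosub⟩ :
      ∃ Vo : ℕ → Set ((ℕ → Bool) × (ℕ → Bool)),
        (∀ n, IsOpen (Vo n)) ∧ (∀ n, Dense (Vo n)) ∧ (⋂ n, Vo n) ⊆ Rᶜ := by
    rcases Set.eq_empty_or_nonempty S with rfl | hne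
    · exact ⟨fun _ => Set.univ, fun _ => isOpen_univ, fun _ => dense_univ,
        fun x _ => hSsub (by simp)⟩
    · obtain ⟨f, hf⟩ := hScnt.exists_eq_range hne
      refine ⟨f, fun n => hSo _ (hf ▸ Set.mem_range_self n),
        fun n => hSd _ (hf ▸ Set.mem_range_self n), ?_⟩
      rw [hf, Set.sInter_range] at hSsub
      exact hSsub
  set G : ℕ → Set (X × X) := fun m => Dᶜ ∩ ⋂ j ∈ Finset.range (m + 1), Vo j with hG
  have hGo : ∀ m, IsOpen (G m) := fun m =>
    hDo.inter (isOpen_biInter_finset fun j _ => hVoo j)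
  have hGdense_aux : ∀ m, Dense (⋂ j ∈ Finset.range m, Vo j) ∧
      IsOpen (⋂ j ∈ Finset.range m, Vo j) := by
    intro m
    induction m with
    | zero => simp
    | succ m ih =>
      rw [Finset.range_add_one, Finset.set_biInter_insert]
      exact ⟨Dense.inter_of_isOpen_left (hVod m) ih.1 (hVoo m), (hVoo m).inter ih.2⟩
  have hGd : ∀ m, Dense (G m) :=
    fun m => Dense.inter_of_isOpen_left hDd (hGdense_aux (m + 1)).1 hDo
  obtain ⟨V, hlen, hpos, hsum, hbox⟩ := E0F0Aux.exists_V k hk G hGo hGd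
  have hmemG : ∀ m (c d : X), c m ≠ d m → (philim V c, philim V d) ∈ G m := fun m c d hm =>
    hbox m c d hm ⟨phi_mem_Cyl hlen hpos c (m + 1), phi_mem_Cyl hlen hpos d (m + 1)⟩
  refine ⟨philim V, philim_continuous, ?_, ?_, ?_⟩
  · intro c d hcd hmem
    obtain ⟨m, hm⟩ := Function.ne_iff.mp hcd
    exact (hmemG m c d hm).1 hmem
  · intro c d hE
    obtain ⟨n, hn⟩ := hE
    have tail : ∀ i, L V n ≤ i → philim V c i = philim V d i :=
      fun i hi => phi_tail_eq hlen hpos hn hi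
    refine ⟨⟨?_, ?_⟩, ⟨L V n, fun m hm => tail m hm⟩⟩
    · rintro ⟨n', hn'⟩
      refine ⟨L V (max n n'), fun m hm => ?_⟩
      set n₀ := max n n' with hn₀
      have hb : bsum (pre V c n₀) % k = bsum (pre V d n₀) % k := by
        rw [pre_mod hk hsum, pre_mod hk hsum]
        exact hn' n₀ (le_max_right _ _)
      have hsplit : ∀ e : X, ∑ j ∈ Finset.range m, (philim V e j).toNat
          = ∑ j ∈ Finset.range (L V n₀), (philim V e j).toNat
            + ∑ j ∈ Finset.Ico (L V n₀) m, (philim V e j).toNat := by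
        intro e
        rw [Finset.range_eq_Ico,
          ← Finset.sum_Ico_consecutive _ (Nat.zero_le (L V n₀)) hm, ← Finset.range_eq_Ico]
      have htl : ∑ j ∈ Finset.Ico (L V n₀) m, (philim V c j).toNat
          = ∑ j ∈ Finset.Ico (L V n₀) m, (philim V d j).toNat := by
        refine Finset.sum_congr rfl fun j hj => ?_
        have hjL : L V n ≤ j :=
          le_trans (L_mono (le_max_left n n')) (Finset.mem_Ico.mp hj).1
        rw [tail j hjL]
      rw [hsplit c, hsplit d, htl, phi_sum hlen hpos, phi_sum hlen hpos,
        Nat.add_mod, hb, ← Nat.add_mod]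
    · rintro ⟨M, hM⟩
      refine ⟨max n M, fun m hm => ?_⟩
      have h1 : M ≤ L V m := le_trans (le_trans (le_max_right n M) hm) (le_L hpos m)
      calc (∑ i ∈ Finset.range m, (c i).toNat) % k
          = bsum (pre V c m) % k := (pre_mod hk hsum c m).symm
        _ = (∑ j ∈ Finset.range (L V m), (philim V c j).toNat) % k := by
            rw [phi_sum hlen hpos]
        _ = (∑ j ∈ Finset.range (L V m), (philim V d j).toNat) % k := hM (L V m) h1
        _ = bsum (pre V d m) % k := by rw [phi_sum hlen hpos]
        _ = _ := pre_mod hk hsum d m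
  · intro c d hE hmem
    have hmem' : (philim V c, philim V d) ∈ ⋂ n, Vo n := by
      refine Set.mem_iInter.mpr fun j => ?_
      have hex : ∃ m, m ≥ j ∧ c m ≠ d m := by
        by_contra h
        push_neg at h
        exact hE ⟨j, fun m hm => h m hm⟩
      obtain ⟨m, hmj, hm⟩ := hex
      have h2 := (hmemG m c d hm).2
      exact Set.mem_iInter₂.mp h2 j (Finset.mem_range.mpr (by omega))
    exact hVosub hmem' hmem
end

section
/- Suppose X is a set, T : X → X is a bijection, and φ : 2^ℕ → X is a homomorphism from 𝔾₀ to the graph of T (i.e., T(φ(sₙ⌢0⌢c)) = φ(sₙ⌢1⌢c) for all n, c). Then for all n ∈ ℕ, all binary strings u, v of length n, and all c ∈ 2^ℕ, T^(|supp(v)| − |supp(u)|)(φ(u⌢c)) = φ(v⌢c), where supp(s) is the set of coordinates where s equals 1. -/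
/-- The number of `1`s among the first `n` bits of `u`. -/
def suppCard (n : ℕ) (u : ℕ → Bool) : ℕ :=
  ((Finset.range n).filter fun i => u i = true).card

lemma cat_succ (n : ℕ) (u c : ℕ → Bool) :
    cat (n+1) u c = cat n u (cons (u n) c) := by
  funext m
  simp only [cat, cons]
  rcases lt_trichotomy m n with h | h | h
  · simp [h, Nat.lt_succ_of_lt h]
  · subst h
    simp
  · have h1 : ¬ m < n := not_lt.2 h.le
    have h2 : ¬ m < n + 1 := by omega
    have h3 : ¬ m - n = 0 := by omega
    simp only [h1, h2, h3, if_false, Nat.sub_sub]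

lemma suppCard_succ (n : ℕ) (u : ℕ → Bool) :
    suppCard (n+1) u = suppCard n u + (if u n = true then 1 else 0) := by
  simp only [suppCard, Finset.range_add_one, Finset.filter_insert]
  split
  · rw [Finset.card_insert_of_notMem (by simp)]
  · rfl

lemma perm_zpow_apply {X : Type} (T : Equiv.Perm X) (a b : ℤ) (x : X) :
    (T ^ a) ((T ^ b) x) = (T ^ (a + b)) x := by
  rw [zpow_add, Equiv.Perm.mul_apply]

lemma perm_apply_zpow {X : Type} (T : Equiv.Perm X) (b : ℤ) (x : X) :
    T ((T ^ b) x) = (T ^ (1 + b)) x := by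
  rw [zpow_one_add, Equiv.Perm.mul_apply]

lemma perm_zpow_apply_one {X : Type} (T : Equiv.Perm X) (a : ℤ) (x : X) :
    (T ^ a) (T x) = (T ^ (a + 1)) x := by
  rw [zpow_add_one, Equiv.Perm.mul_apply]

lemma key (s : ℕ → ℕ → Bool) (X : Type) (T : Equiv.Perm X) (φ : (ℕ → Bool) → X)
    (hφ : ∀ (n : ℕ) (c : ℕ → Bool),
      T (φ (cat n (s n) (cons false c))) = φ (cat n (s n) (cons true c))) :
    ∀ (n : ℕ) (u c : ℕ → Bool),
      φ (cat n u c) = (T ^ (suppCard n u : ℤ)) (φ (cat n (fun _ => false) c)) := by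
  intro n
  induction n with
  | zero =>
    intro u c
    have h0 : cat 0 u c = cat 0 (fun _ => false) c := by
      funext m; simp [cat]
    simp [suppCard, h0]
  | succ n ih =>
    intro u c
    rw [cat_succ, cat_succ]
    simp only [suppCard_succ]
    cases hu : u n with
    | false =>
      simpa using ih u (cons false c)
    | true =>
      have h1 := ih u (cons true c)
      have h2 := ih (s n) (cons true c)
      have h3 := ih (s n) (cons false c)
      have h4 := hφ n c
      set b : ℤ := (suppCard n (s n) : ℤ) with hb
      have e1 : (T ^ (-b)) (φ (cat n (s n) (cons true c)))
          = φ (cat n (fun _ => false) (cons true c)) := by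
        rw [h2, perm_zpow_apply, neg_add_cancel, zpow_zero]
        rfl
      have h5 : φ (cat n (fun _ => false) (cons true c))
          = T (φ (cat n (fun _ => false) (cons false c))) := by
        rw [← e1, ← h4, h3, perm_apply_zpow, perm_zpow_apply]
        have : -b + (1 + b) = 1 := by ring
        rw [this, zpow_one]
      rw [h1, h5, perm_zpow_apply_one]
      norm_num

theorem homomorphism_from_g0_to_graph
    (s : ℕ → ℕ → Bool) (hs : DenseStrings s)
    (X : Type) (T : Equiv.Perm X) (φ : (ℕ → Bool) → X)
    (hφ : ∀ (n : ℕ) (c : ℕ → Bool),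
      T (φ (cat n (s n) (cons false c))) = φ (cat n (s n) (cons true c))) :
    ∀ (n : ℕ) (u v c : ℕ → Bool),
      (T ^ ((suppCard n v : ℤ) - (suppCard n u : ℤ))) (φ (cat n u c)) =
        φ (cat n v c) := by
  intro n u v c
  rw [key s X T φ hφ n u c, key s X T φ hφ n v c, perm_zpow_apply]
  congr 1
  ring
end

section
/- If j, k ≥ 2 and j divides k, then there is a continuous injection φ : 2^ℕ → 2^ℕ that is simultaneously a reduction of E₀ to E₀ and of F₀(j) to F₀(k); explicitly φ(c) = the concatenation over n of the constant block of c(n) repeated k/j times works. -/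
open Finset Filter Function

def stretch {α : Type*} (r : ℕ) (c : ℕ → α) : ℕ → α := fun m => c (m / r)

section Stretch

variable {α : Type*} {r : ℕ}

theorem continuous_stretch [TopologicalSpace α] (r : ℕ) : Continuous (stretch (α := α) r) :=
  continuous_pi fun _ => continuous_apply _

theorem stretch_mul_add (c : ℕ → α) (q : ℕ) {s : ℕ} (hs : s < r) :
    stretch r c (q * r + s) = c q := by
  rw [stretch, mul_comm, Nat.mul_add_div (by omega), Nat.div_eq_of_lt hs, add_zero]

theorem stretch_mul (hr : 0 < r) (c : ℕ → α) (q : ℕ) : stretch r c (q * r) = c q :=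
  stretch_mul_add c q hr

theorem stretch_injective (hr : 0 < r) : Injective (stretch (α := α) r) := fun c d h =>
  funext fun q => by rw [← stretch_mul hr c, ← stretch_mul hr d, h]

theorem sum_range_mul_add_stretch {M : Type*} [AddCommMonoid M] (f : ℕ → M) (q : ℕ) {s : ℕ}
    (hs : s ≤ r) : ∑ i ∈ range (q * r + s), stretch r f i = r • ∑ i ∈ range q, f i + s • f q := by
  have block : ∀ q, ∀ s ≤ r, ∑ x ∈ range s, stretch r f (q * r + x) = s • f q := fun q s hs => by
    rw [Finset.sum_congr rfl fun x hx => stretch_mul_add f q ((mem_range.1 hx).trans_le hs),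
      sum_const, card_range]
  induction q generalizing s with
  | zero => simpa using block 0 s hs
  | succ q ih =>
    rw [sum_range_add, block _ _ hs, add_one_mul, ih le_rfl, sum_range_succ, nsmul_add]

end Stretch

theorem tendsto_mul_const_atTop_nat {r : ℕ} (hr : 0 < r) :
    Tendsto (fun q => q * r) atTop atTop :=
  tendsto_id.atTop_mul_const' hr

theorem E0_iff_eventually {c d : ℕ → Bool} : E0 c d ↔ ∀ᶠ m in atTop, c m = d m :=
  eventually_atTop.symm

theorem F0_iff_eventually {k : ℕ} {c d : ℕ → Bool} :
    F0 k c d ↔ ∀ᶠ m in atTop,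
      ∑ i ∈ range m, (c i).toNat ≡ ∑ i ∈ range m, (d i).toNat [MOD k] :=
  eventually_atTop.symm

theorem E0_stretch_iff {r : ℕ} (hr : 0 < r) {c d : ℕ → Bool} :
    E0 (stretch r c) (stretch r d) ↔ E0 c d := by
  simp only [E0_iff_eventually]
  refine ⟨fun h => ?_, fun h => (Nat.tendsto_div_const_atTop hr.ne').eventually h⟩
  filter_upwards [(tendsto_mul_const_atTop_nat hr).eventually h] with q hq
  simpa only [stretch_mul hr] using hq

theorem E0_of_F0 {j : ℕ} (hj : 2 ≤ j) {c d : ℕ → Bool} (h : F0 j c d) : E0 c d := by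
  rw [F0_iff_eventually] at h
  rw [E0_iff_eventually]
  filter_upwards [h, (tendsto_add_atTop_nat 1).eventually h] with q hq hq1
  rw [sum_range_succ, sum_range_succ] at hq1
  have hbit := (hq.add_left_cancel hq1).eq_of_lt_of_lt
    ((Bool.toNat_lt _).trans_le hj) ((Bool.toNat_lt _).trans_le hj)
  grind [Bool.toNat]

theorem F0_stretch_iff {j r : ℕ} (hj : 2 ≤ j) (hr : 0 < r) {c d : ℕ → Bool} :
    F0 (j * r) (stretch r c) (stretch r d) ↔ F0 j c d := by
  have partialSum (c : ℕ → Bool) (q : ℕ) {s : ℕ} (hs : s ≤ r) :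
      ∑ i ∈ range (q * r + s), (stretch r c i).toNat
        = r * ∑ i ∈ range q, (c i).toNat + s * (c q).toNat :=
    sum_range_mul_add_stretch (fun i => (c i).toNat) q hs
  simp only [F0_iff_eventually]
  constructor
  · intro h
    filter_upwards [(tendsto_mul_const_atTop_nat hr).eventually h] with q hq
    rw [← add_zero (q * r), partialSum c q r.zero_le, partialSum d q r.zero_le] at hq
    simp only [zero_mul, add_zero, mul_comm j r] at hq
    exact hq.mul_left_cancel' hr.ne'
  · intro h
    have hE := E0_iff_eventually.1 (E0_of_F0 hj (F0_iff_eventually.2 h))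
    filter_upwards [(Nat.tendsto_div_const_atTop hr.ne').eventually (h.and hE)]
      with m ⟨hsum, hbit⟩
    rw [← Nat.div_add_mod' m r, partialSum c _ (Nat.mod_lt m hr).le,
      partialSum d _ (Nat.mod_lt m hr).le, hbit, mul_comm j r]
    exact (hsum.mul_left' r).add_right _

/-- If `j ∣ k` then stretching each bit into a constant block of length `k / j`
gives a continuous injection that embeds `(E₀, F₀(j))` into `(E₀, F₀(k))`. -/
theorem embedding_f0_of_dvd (j k : ℕ) (hj : 2 ≤ j) (hk : 2 ≤ k) (hjk : j ∣ k) :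
    ∃ φ : (ℕ → Bool) → (ℕ → Bool),
      (φ = fun c m => c (m / (k / j))) ∧
      Continuous φ ∧ Function.Injective φ ∧
      (∀ c d, E0 c d ↔ E0 (φ c) (φ d)) ∧
      (∀ c d, F0 j c d ↔ F0 k (φ c) (φ d)) := by
  obtain ⟨r, rfl⟩ := hjk
  have hr : 0 < r := Nat.pos_of_ne_zero fun h => by simp [h] at hk
  rw [Nat.mul_div_cancel_left r (by omega)]
  exact ⟨stretch r, rfl, continuous_stretch r, stretch_injective hr,
    fun c d => (E0_stretch_iff hr).symm, fun c d => (F0_stretch_iff hj hr).symm⟩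
end

section
/- Suppose X is a topological space, F ⊆ E are equivalence relations on X such that the E-saturation of every F-invariant Borel set is Borel, there is a countable cover (Bₙ) of X by F-invariant Borel partial transversals of E over F, and B ⊆ X is an F-invariant Borel partial transversal of E over F. Then B is contained in an F-invariant Borel transversal of E over F (an E-complete partial transversal). -/
open MeasureTheory
theorem extend_to_full_transversal
    (X : Type) [TopologicalSpace X]
    (E F : X → X → Prop) (hE : Equivalence E) (hF : Equivalence F)
    (hFE : ∀ a b, F a b → E a b)
    (hsatBorel : ∀ A : Set X, MeasurableSet[borel X] A →
      (∀ a b, F a b → (a ∈ A ↔ b ∈ A)) →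
      MeasurableSet[borel X] {x | ∃ a ∈ A, E x a})
    (Bseq : ℕ → Set X) (hcover : (⋃ n, Bseq n) = Set.univ)
    (hBseq : ∀ n, MeasurableSet[borel X] (Bseq n) ∧
      (∀ a b, F a b → (a ∈ Bseq n ↔ b ∈ Bseq n)) ∧
      (∀ a ∈ Bseq n, ∀ b ∈ Bseq n, E a b → F a b))
    (B : Set X) (hB : MeasurableSet[borel X] B)
    (hBinv : ∀ a b, F a b → (a ∈ B ↔ b ∈ B))
    (hBpt : ∀ a ∈ B, ∀ b ∈ B, E a b → F a b) :
    ∃ B' : Set X, B ⊆ B' ∧ MeasurableSet[borel X] B' ∧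
      (∀ a b, F a b → (a ∈ B' ↔ b ∈ B')) ∧
      (∀ a ∈ B', ∀ b ∈ B', E a b → F a b) ∧
      ∀ x : X, ∃ b ∈ B', E x b := by
  classical
  set sat : Set X → Set X := fun A => {x | ∃ a ∈ A, E x a} with hsat
  -- sat is F-invariant
  have satInv : ∀ (A : Set X), ∀ a b, F a b → (a ∈ sat A ↔ b ∈ sat A) := by
    intro A a b hab
    constructor
    · rintro ⟨c, hc, hac⟩
      exact ⟨c, hc, hE.trans (hFE _ _ (hF.symm hab)) hac⟩
    · rintro ⟨c, hc, hbc⟩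
      exact ⟨c, hc, hE.trans (hFE _ _ hab) hbc⟩
  let C : ℕ → Set X := fun n => Nat.rec B (fun n Cn => Cn ∪ (Bseq n \ sat Cn)) n
  have hCsucc : ∀ n, C (n + 1) = C n ∪ (Bseq n \ sat (C n)) := fun n => rfl
  have hC0 : C 0 = B := rfl
  -- main induction
  have main : ∀ n, MeasurableSet[borel X] (C n) ∧
      (∀ a b, F a b → (a ∈ C n ↔ b ∈ C n)) ∧
      (∀ a ∈ C n, ∀ b ∈ C n, E a b → F a b) := by
    intro n
    induction n with
    | zero => exact ⟨hB, hBinv, hBpt⟩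
    | succ n ih =>
      obtain ⟨hm, hinv, hpt⟩ := ih
      obtain ⟨hmB, hinvB, hptB⟩ := hBseq n
      refine ⟨?_, ?_, ?_⟩
      · exact hm.union (hmB.diff (hsatBorel _ hm hinv))
      · intro a b hab
        rw [hCsucc]
        simp only [Set.mem_union, Set.mem_diff]
        rw [hinv a b hab, hinvB a b hab, satInv (C n) a b hab]
      · intro a ha b hb hab
        rw [hCsucc] at ha hb
        rcases ha with ha | ⟨haB, hans⟩
        · rcases hb with hb | ⟨hbB, hbns⟩
          · exact hpt a ha b hb hab
          · exact absurd ⟨a, ha, hE.symm hab⟩ hbns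
        · rcases hb with hb | ⟨hbB, hbns⟩
          · exact absurd ⟨b, hb, hab⟩ hans
          · exact hptB a haB b hbB hab
  have hmono : ∀ m n, m ≤ n → C m ⊆ C n := by
    intro m n h
    induction h with
    | refl => exact subset_rfl
    | step h ih => exact fun x hx => Or.inl (ih hx)
  refine ⟨⋃ n, C n, Set.subset_iUnion C 0, MeasurableSet.iUnion fun n => (main n).1,
    ?_, ?_, ?_⟩
  · intro a b hab
    simp only [Set.mem_iUnion]
    exact exists_congr fun n => (main n).2.1 a b hab
  · rintro a ha b hb hab
    simp only [Set.mem_iUnion] at ha hb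
    obtain ⟨m, ha⟩ := ha
    obtain ⟨k, hb⟩ := hb
    exact (main (max m k)).2.2 a (hmono m _ (le_max_left m k) ha)
      b (hmono k _ (le_max_right m k) hb) hab
  · intro x
    have hx : x ∈ ⋃ n, Bseq n := hcover ▸ Set.mem_univ x
    obtain ⟨n, hn⟩ := Set.mem_iUnion.mp hx
    rcases Classical.em (x ∈ sat (C n)) with hs | hs
    · obtain ⟨b, hb, hxb⟩ := hs
      exact ⟨b, Set.mem_iUnion.mpr ⟨n, hb⟩, hxb⟩
    · exact ⟨x, Set.mem_iUnion.mpr ⟨n + 1, Or.inr ⟨hn, hs⟩⟩, hE.refl x⟩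
end

section
/- Every Borel partial quasi-transversal of E₀ on 2^ℕ with the Baire property is meager, where Y ⊆ 2^ℕ is a partial quasi-transversal of E₀ if there is k ∈ ℕ such that every E₀-class meets Y in at most k points. -/
/-- Flip the coordinates in `[n, n+j)`. -/
def flipMap (n j : ℕ) (x : ℕ → Bool) : ℕ → Bool :=
  fun i => if n ≤ i ∧ i < n + j then !(x i) else x i

lemma flipMap_involutive (n j : ℕ) : Function.Involutive (flipMap n j) := by
  intro x
  funext i
  simp only [flipMap]
  split <;> simp

lemma flipMap_continuous (n j : ℕ) : Continuous (flipMap n j) := by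
  refine continuous_pi fun i => ?_
  unfold flipMap
  split
  · exact Continuous.comp (continuous_of_discreteTopology : Continuous Bool.not) (continuous_apply i)
  · exact continuous_apply i

lemma flipMap_isOpenMap (n j : ℕ) : IsOpenMap (flipMap n j) := by
  intro s hs
  have : flipMap n j '' s = flipMap n j ⁻¹' s := by
    ext x
    constructor
    · rintro ⟨y, hy, rfl⟩
      simpa [flipMap_involutive n j y] using hy
    · intro hx
      exact ⟨flipMap n j x, hx, flipMap_involutive n j x⟩
  rw [this]
  exact hs.preimage (flipMap_continuous n j)

lemma flipMap_apply_of_ge (n j : ℕ) (x : ℕ → Bool) {m : ℕ} (hm : n + j ≤ m) :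
    flipMap n j x m = x m := by
  simp only [flipMap]
  rw [if_neg]
  omega

lemma flipMap_apply_of_lt (n j : ℕ) (x : ℕ → Bool) {m : ℕ} (h1 : n ≤ m) (h2 : m < n + j) :
    flipMap n j x m = !(x m) := by
  simp only [flipMap]
  rw [if_pos ⟨h1, h2⟩]

lemma flipMap_ne (n : ℕ) {j j' : ℕ} (h : j < j') (x : ℕ → Bool) :
    flipMap n j x ≠ flipMap n j' x := by
  intro he
  have h1 : flipMap n j x (n + j) = x (n + j) := flipMap_apply_of_ge n j x le_rfl
  have h2 : flipMap n j' x (n + j) = !(x (n + j)) :=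
    flipMap_apply_of_lt n j' x (Nat.le_add_right _ _) (by omega)
  rw [he, h2] at h1
  exact Bool.not_ne_self _ h1

/-- Every partial quasi-transversal of `E₀` with the Baire property is
meager. -/
theorem quasi_transversal_of_e0_meager
    (B : Set (ℕ → Bool)) (hBbp : BaireMeasurableSet B)
    (hqt : ∃ k : ℕ, ∀ c : ℕ → Bool,
      Set.encard {d | d ∈ B ∧ E0 c d} ≤ (k : ℕ∞)) :
    IsMeagre B := by
  classical
  by_contra hB
  obtain ⟨k, hk⟩ := hqt
  obtain ⟨U, hUo, hUeq⟩ := hBbp.residualEq_isOpen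
  -- the symmetric-difference-style sets are meager
  have hres : {x | x ∈ B ↔ x ∈ U} ∈ residual (ℕ → Bool) := Filter.eventuallyEq_set.mp hUeq
  have hUB : IsMeagre (U \ B) := by
    rw [IsMeagre]
    refine Filter.mem_of_superset hres ?_
    intro x hx hxd
    exact hxd.2 (hx.mpr hxd.1)
  have hBU : IsMeagre (B \ U) := by
    rw [IsMeagre]
    refine Filter.mem_of_superset hres ?_
    intro x hx hxd
    exact hxd.2 (hx.mp hxd.1)
  -- U is nonempty
  have hUne : U.Nonempty := by
    rcases Set.eq_empty_or_nonempty U with h | h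
    · exact absurd (hBU.mono (by rw [h]; simp)) hB
    · exact h
  obtain ⟨x₀, hx₀⟩ := hUne
  -- find a basic cylinder around x₀ inside U
  obtain ⟨I, u, hIu, hpi⟩ := isOpen_pi_iff.mp hUo x₀ hx₀
  set n : ℕ := if h : I.Nonempty then I.max' h + 1 else 0 with hn
  have hIlt : ∀ i ∈ I, i < n := by
    intro i hi
    rw [hn, dif_pos ⟨i, hi⟩]
    exact Nat.lt_succ_of_le (I.le_max' i hi)
  set C : Set (ℕ → Bool) := {y | ∀ i < n, y i = x₀ i} with hC
  have hCsub : C ⊆ U := by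
    intro y hy
    apply hpi
    intro i hi
    rw [hy i (hIlt i hi)]
    exact (hIu i hi).2
  have hCo : IsOpen C := by
    have : C = ⋂ i : Fin n, (fun y : ℕ → Bool => y (i : ℕ)) ⁻¹' {x₀ (i : ℕ)} := by
      ext y
      simp only [hC, Set.mem_setOf_eq, Set.mem_iInter, Set.mem_preimage, Set.mem_singleton_iff]
      exact ⟨fun h i => h i i.2, fun h i hi => h ⟨i, hi⟩⟩
    rw [this]
    exact isOpen_iInter_of_finite fun i =>
      (isOpen_discrete _).preimage (continuous_apply (i : ℕ))
  have hx₀C : x₀ ∈ C := fun i _ => rfl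
  -- flips preserve C
  have hflipC : ∀ j : ℕ, ∀ x ∈ C, flipMap n j x ∈ C := by
    intro j x hx i hi
    rw [flipMap]
    rw [if_neg (by omega)]
    exact hx i hi
  -- the bad set
  have hMeag : IsMeagre (⋃ j : ℕ, flipMap n j ⁻¹' (U \ B)) :=
    isMeagre_iUnion fun j =>
      hUB.preimage_of_isOpenMap (flipMap_continuous n j) (flipMap_isOpenMap n j)
  have hdense : Dense (⋃ j : ℕ, flipMap n j ⁻¹' (U \ B))ᶜ :=
    dense_of_mem_residual hMeag
  obtain ⟨x, hxM, hxC⟩ := hdense.exists_mem_open hCo ⟨x₀, hx₀C⟩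
  -- each flip of x lies in B
  have hxB : ∀ j : ℕ, flipMap n j x ∈ B := by
    intro j
    have h1 : flipMap n j x ∈ U := hCsub (hflipC j x hxC)
    have h2 : x ∉ flipMap n j ⁻¹' (U \ B) := by
      intro h
      exact hxM (Set.mem_iUnion.mpr ⟨j, h⟩)
    by_contra hnB
    exact h2 ⟨h1, hnB⟩
  -- all flips are E0-equivalent to x
  have hE0 : ∀ j : ℕ, j ≤ k → E0 x (flipMap n j x) := by
    intro j hj
    exact ⟨n + k, fun m hm => (flipMap_apply_of_ge n j x (by omega)).symm⟩
  -- build k+1 distinct points in the class of x inside B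
  set S : Set (ℕ → Bool) := (fun j : Fin (k + 1) => flipMap n j x) '' Set.univ with hS
  have hinj : Function.Injective (fun j : Fin (k + 1) => flipMap n (j : ℕ) x) := by
    intro a b hab
    by_contra hne
    rcases lt_or_gt_of_ne (fun h : (a : ℕ) = (b : ℕ) => hne (Fin.ext h)) with h | h
    · exact flipMap_ne n h x hab
    · exact flipMap_ne n h x hab.symm
  have hSsub : S ⊆ {d | d ∈ B ∧ E0 x d} := by
    rintro _ ⟨j, -, rfl⟩
    exact ⟨hxB j, hE0 j (Nat.lt_succ_iff.mp j.2)⟩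
  have hScard : S.encard = (k + 1 : ℕ) := by
    rw [hS, hinj.encard_image, Set.encard_univ]
    simp
  have hle : (k + 1 : ℕ∞) ≤ (k : ℕ∞) := by
    calc (k + 1 : ℕ∞) = S.encard := by rw [hScard]; push_cast; ring
    _ ≤ Set.encard {d | d ∈ B ∧ E0 x d} := Set.encard_mono hSsub
    _ ≤ (k : ℕ∞) := hk x
  norm_cast at hle
  omega
end
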